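/- arXiv:1711.00807 — 7 statements merged into one kernel-verified Lean document; each statement's English description precedes it below -/
import Mathlib

section
/- For any n×n real matrix M and any real p with 2 ≤ p < ∞, the Schatten p-norm of M is at least the mixed ℓ_p(ℓ_2) norm of its rows: (∑_i |σ_i(M)|^p)^(1/p) ≥ (∑_i (∑_j M_{ij}^2)^{p/2})^{1/p}, where σ_i(M) are the singular values of M. -/
open Real

/-- Schatten `p`-norm of a real matrix: the `ℓ_p` norm of its singular values,
computed via the eigenvalues of `M * M.conjTranspose`. -/
noncomputable def schattenNorm {α β : Type*} [Fintype α] [Fintype β] [DecidableEq α]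
    (p : ℝ) (M : Matrix α β ℝ) : ℝ :=
  (∑ i, ((Matrix.isHermitian_mul_conjTranspose_self M).eigenvalues i) ^ (p / 2)) ^ (1 / p)

/-- Mixed `ℓ_p(ℓ_2)` norm: the `ℓ_p` norm of the Euclidean norms of the rows. -/
noncomputable def mixedNorm {α β : Type*} [Fintype α] [Fintype β]
    (p : ℝ) (M : Matrix α β ℝ) : ℝ :=
  (∑ i, (∑ j, (M i j) ^ 2) ^ (p / 2)) ^ (1 / p)

/-- For any `n×n` real matrix and `2 ≤ p < ∞`, the Schatten `p`-norm dominates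
the mixed `ℓ_p(ℓ_2)` norm of the rows. -/
theorem stmt0 {n : ℕ} (p : ℝ) (hp : 2 ≤ p) (M : Matrix (Fin n) (Fin n) ℝ) :
    mixedNorm p M ≤ schattenNorm p M := by
  set A := M * M.conjTranspose with hA_def
  have hA : A.IsHermitian := Matrix.isHermitian_mul_conjTranspose_self M
  set lam := hA.eigenvalues with hlam_def
  have hlam0 : ∀ k, 0 ≤ lam k := fun k => M.eigenvalues_self_mul_conjTranspose_nonneg k
  set V : Matrix (Fin n) (Fin n) ℝ := (hA.eigenvectorUnitary : Matrix (Fin n) (Fin n) ℝ)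
    with hV_def
  have hspec : A = V * Matrix.diagonal (RCLike.ofReal ∘ lam) * star V := hA.spectral_theorem
  have hVV : V * star V = 1 := (Matrix.mem_unitaryGroup_iff).mp hA.eigenvectorUnitary.2
  have hVV' : star V * V = 1 := (Matrix.mem_unitaryGroup_iff').mp hA.eigenvectorUnitary.2
  -- diagonal entries of A
  have hdiag : ∀ i, A i i = ∑ k, (V i k) ^ 2 * lam k := by
    intro i
    rw [hspec]
    simp [Matrix.mul_apply, Matrix.diagonal_apply, Finset.sum_mul, Matrix.star_apply,
      Finset.mul_sum]
    refine Finset.sum_congr rfl fun k _ => ?_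
    simp [Finset.mul_sum, Finset.sum_eq_single k, pow_two]
    ring
  have hrow : ∀ i, (∑ j, (M i j) ^ 2) = A i i := by
    intro i
    simp [hA_def, Matrix.mul_apply, Matrix.conjTranspose_apply, pow_two]
  -- weights sum to 1 (rows of V)
  have hwrow : ∀ i, ∑ k, (V i k) ^ 2 = 1 := by
    intro i
    have := congrFun (congrFun hVV i) i
    simpa [Matrix.mul_apply, Matrix.star_apply, Matrix.one_apply, pow_two] using this
  -- columns of V
  have hwcol : ∀ k, ∑ i, (V i k) ^ 2 = 1 := by
    intro k
    have := congrFun (congrFun hVV' k) k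
    simpa [Matrix.mul_apply, Matrix.star_apply, Matrix.one_apply, pow_two] using this
  have hq : (1 : ℝ) ≤ p / 2 := by linarith
  -- key inequality
  have key : ∑ i, (∑ j, (M i j) ^ 2) ^ (p/2) ≤ ∑ k, (lam k) ^ (p/2) := by
    have step : ∀ i, (∑ j, (M i j) ^ 2) ^ (p/2) ≤ ∑ k, (V i k)^2 * (lam k) ^ (p/2) := by
      intro i
      rw [hrow i, hdiag i]
      exact Real.rpow_arith_mean_le_arith_mean_rpow Finset.univ (fun k => (V i k)^2) lam
        (fun k _ => sq_nonneg _) (hwrow i) (fun k _ => hlam0 k) hq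
    calc ∑ i, (∑ j, (M i j) ^ 2) ^ (p/2)
        ≤ ∑ i, ∑ k, (V i k)^2 * (lam k) ^ (p/2) :=
          Finset.sum_le_sum fun i _ => step i
      _ = ∑ k, (∑ i, (V i k)^2) * (lam k) ^ (p/2) := by
          rw [Finset.sum_comm]; simp [Finset.sum_mul]
      _ = ∑ k, (lam k) ^ (p/2) := by
          refine Finset.sum_congr rfl fun k _ => ?_
          rw [hwcol k, one_mul]
  -- conclude
  unfold mixedNorm schattenNorm
  refine Real.rpow_le_rpow ?_ key (by positivity)
  exact Finset.sum_nonneg fun i _ => Real.rpow_nonneg (Finset.sum_nonneg fun j _ => sq_nonneg _) _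
end

section
/- Let b_{ij} ≥ 0 for i,j ∈ [n] and let p ≥ 2 be an integer. Then (∑_{i,j} b_{ij}^{2p})^{1/2p} ≤ C·[e^{-p} (∑_i (∑_j b_{ij}^2)^p)^{1/2p} + (∑_i max_j b_{ij}^{2p})^{1/2p}] for a universal constant C. -/
open Real

private lemma aux_rpow_add {x y t : ℝ} (hx : 0 ≤ x) (hy : 0 ≤ y) (ht0 : 0 ≤ t)
    (ht1 : t ≤ 1) : (x + y) ^ t ≤ x ^ t + y ^ t := by
  have h := NNReal.rpow_add_le_add_rpow x.toNNReal y.toNNReal ht0 ht1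
  have := NNReal.coe_le_coe.2 h
  simpa [NNReal.coe_rpow, ← Real.toNNReal_add hx hy, Real.coe_toNNReal _ (by positivity : (0:ℝ) ≤ x + y),
    Real.coe_toNNReal _ hx, Real.coe_toNNReal _ hy] using this

/-- For nonnegative `b : n×n` and integer `p ≥ 2`,
`(∑_{i,j} b_{ij}^{2p})^{1/2p} ≤ C (e^{-p} (∑_i (∑_j b_{ij}^2)^p)^{1/2p}
  + (∑_i max_j b_{ij}^{2p})^{1/2p})` for a universal constant `C`. -/
theorem stmt1 : ∃ C : ℝ, 0 < C ∧ ∀ (n p : ℕ), 2 ≤ p →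
    ∀ b : Matrix (Fin n) (Fin n) ℝ, (∀ i j, 0 ≤ b i j) →
    (∑ i, ∑ j, b i j ^ (2 * p)) ^ (1 / (2 * (p : ℝ))) ≤
      C * (Real.exp (-(p : ℝ)) * (∑ i, (∑ j, b i j ^ 2) ^ p) ^ (1 / (2 * (p : ℝ)))
        + (∑ i, ⨆ j, b i j ^ (2 * p)) ^ (1 / (2 * (p : ℝ)))) := by
  refine ⟨Real.exp 1, Real.exp_pos 1, ?_⟩
  intro n p hp b hb
  have hp0 : (0:ℝ) < p := by exact_mod_cast (by omega : 0 < p)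
  set r : ℝ := 1 / (2 * (p : ℝ)) with hr
  have hr0 : 0 < r := by positivity
  have hr1 : r ≤ 1 := by
    have hp2 : (2:ℝ) ≤ p := by exact_mod_cast hp
    rw [hr, div_le_one (by positivity)]
    linarith
  rcases Nat.eq_zero_or_pos n with hn | hn
  · subst hn
    simp [Real.zero_rpow hr0.ne']
  haveI : Nonempty (Fin n) := ⟨⟨0, hn⟩⟩
  set a : ℝ := Real.exp (-(2 * (p:ℝ))) with ha_def
  have ha : 0 < a := Real.exp_pos _
  -- per row inequality
  have hsupnn : ∀ i, 0 ≤ ⨆ j, b i j ^ (2 * p) := by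
    intro i
    refine le_ciSup_of_le (Set.Finite.bddAbove (Set.finite_range _)) ⟨0, hn⟩ ?_
    exact pow_nonneg (hb _ _) _
  have key : ∀ i, ∑ j, b i j ^ (2 * p) ≤
      a ^ (p - 1) * (∑ j, b i j ^ 2) ^ p + (1 / a) * (⨆ j, b i j ^ (2 * p)) := by
    intro i
    obtain ⟨j0, hj0⟩ := Finite.exists_max (fun j => b i j)
    set m : ℝ := b i j0 with hm
    have hm0 : 0 ≤ m := hb i j0
    have hsum2 : 0 ≤ ∑ j, b i j ^ 2 := by positivity
    have hsupm : m ^ (2 * p) ≤ ⨆ j, b i j ^ (2 * p) :=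
      le_ciSup (f := fun j => b i j ^ (2 * p)) (Set.Finite.bddAbove (Set.finite_range _)) j0
    rcases le_or_gt (m ^ 2) (a * ∑ j, b i j ^ 2) with hcase | hcase
    · have h1 : ∑ j, b i j ^ (2 * p) ≤ a ^ (p - 1) * (∑ j, b i j ^ 2) ^ p := by
        have hstep : ∀ j ∈ Finset.univ, b i j ^ (2 * p) ≤
            b i j ^ 2 * (a * ∑ j, b i j ^ 2) ^ (p - 1) := by
          intro j _
          have hjm : b i j ^ 2 ≤ m ^ 2 := by
            have := hj0 j
            nlinarith [hb i j]
          calc b i j ^ (2 * p) = (b i j ^ 2) ^ p := by rw [← pow_mul]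
            _ = b i j ^ 2 * (b i j ^ 2) ^ (p - 1) := by
                rw [← pow_succ']; congr 1; omega
            _ ≤ b i j ^ 2 * (a * ∑ j, b i j ^ 2) ^ (p - 1) := by
                apply mul_le_mul_of_nonneg_left _ (by positivity)
                exact pow_le_pow_left₀ (by positivity) (hjm.trans hcase) _
        calc ∑ j, b i j ^ (2 * p) ≤ ∑ j, b i j ^ 2 * (a * ∑ j, b i j ^ 2) ^ (p - 1) :=
              Finset.sum_le_sum hstep
          _ = (a * ∑ j, b i j ^ 2) ^ (p - 1) * ∑ j, b i j ^ 2 := by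
              rw [← Finset.sum_mul]; ring
          _ = a ^ (p - 1) * (∑ j, b i j ^ 2) ^ p := by
              have h3 : (∑ j, b i j ^ 2) ^ (p - 1) * (∑ j, b i j ^ 2) = (∑ j, b i j ^ 2) ^ p := by
                rw [← pow_succ]; congr 1; omega
              rw [mul_pow, mul_assoc, h3]
      have : (0:ℝ) ≤ (1 / a) * (⨆ j, b i j ^ (2 * p)) :=
        mul_nonneg (div_nonneg zero_le_one ha.le) (hsupnn i)
      linarith
    · have hsum_le : ∑ j, b i j ^ 2 ≤ m ^ 2 / a := by
        rw [le_div_iff₀ ha]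
        nlinarith
      have h2 : ∑ j, b i j ^ (2 * p) ≤ (1 / a) * (⨆ j, b i j ^ (2 * p)) := by
        have hstep : ∀ j ∈ Finset.univ, b i j ^ (2 * p) ≤
            b i j ^ 2 * (m ^ 2) ^ (p - 1) := by
          intro j _
          have hjm : b i j ^ 2 ≤ m ^ 2 := by
            have := hj0 j
            nlinarith [hb i j]
          calc b i j ^ (2 * p) = (b i j ^ 2) ^ p := by rw [← pow_mul]
            _ = b i j ^ 2 * (b i j ^ 2) ^ (p - 1) := by
                rw [← pow_succ']; congr 1; omega
            _ ≤ b i j ^ 2 * (m ^ 2) ^ (p - 1) := by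
                apply mul_le_mul_of_nonneg_left _ (by positivity)
                exact pow_le_pow_left₀ (by positivity) hjm _
        calc ∑ j, b i j ^ (2 * p) ≤ ∑ j, b i j ^ 2 * (m ^ 2) ^ (p - 1) :=
              Finset.sum_le_sum hstep
          _ = (m ^ 2) ^ (p - 1) * ∑ j, b i j ^ 2 := by rw [← Finset.sum_mul]; ring
          _ ≤ (m ^ 2) ^ (p - 1) * (m ^ 2 / a) := by
              exact mul_le_mul_of_nonneg_left hsum_le (by positivity)
          _ = (1 / a) * m ^ (2 * p) := by
              have hpp : (m ^ 2) ^ (p - 1) * m ^ 2 = m ^ (2 * p) := by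
                rw [← pow_succ, ← pow_mul]; congr 1; omega
              rw [← hpp]; ring
          _ ≤ (1 / a) * (⨆ j, b i j ^ (2 * p)) := by
              exact mul_le_mul_of_nonneg_left hsupm (by positivity)
      have : (0:ℝ) ≤ a ^ (p - 1) * (∑ j, b i j ^ 2) ^ p :=
        mul_nonneg (pow_nonneg ha.le _) (pow_nonneg hsum2 _)
      linarith
  set S : ℝ := ∑ i, ∑ j, b i j ^ (2 * p) with hS
  set A : ℝ := ∑ i, (∑ j, b i j ^ 2) ^ p with hA
  set M : ℝ := ∑ i, ⨆ j, b i j ^ (2 * p) with hM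
  have hSnn : 0 ≤ S := by
    rw [hS]
    exact Finset.sum_nonneg fun i _ => Finset.sum_nonneg fun j _ => pow_nonneg (hb i j) _
  have hAnn : 0 ≤ A := by positivity
  have hMnn : 0 ≤ M := Finset.sum_nonneg fun i _ => hsupnn i
  have hglob : S ≤ a ^ (p - 1) * A + (1 / a) * M := by
    rw [hS, hA, hM, Finset.mul_sum, Finset.mul_sum, ← Finset.sum_add_distrib]
    exact Finset.sum_le_sum fun i _ => key i
  -- rpow step
  have step1 : S ^ r ≤ (a ^ (p - 1) * A) ^ r + ((1 / a) * M) ^ r := by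
    calc S ^ r ≤ (a ^ (p - 1) * A + (1 / a) * M) ^ r :=
          Real.rpow_le_rpow hSnn hglob hr0.le
      _ ≤ _ := aux_rpow_add (mul_nonneg (pow_nonneg ha.le _) hAnn)
          (mul_nonneg (div_nonneg zero_le_one ha.le) hMnn) hr0.le hr1
  have h2p : (2 * (p:ℝ)) * r = 1 := by
    rw [hr]; field_simp
  have e1 : (a ^ (p - 1) : ℝ) ^ r = Real.exp 1 * Real.exp (-(p:ℝ)) := by
    have hcast : ((p - 1 : ℕ) : ℝ) = (p:ℝ) - 1 := by
      have : 1 ≤ p := by omega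
      push_cast [this]; ring
    rw [← Real.rpow_natCast a (p - 1), ← Real.rpow_mul ha.le, hcast, ha_def,
      ← Real.exp_mul, ← Real.exp_add]
    congr 1
    have hpne : (2 * (p:ℝ)) ≠ 0 := by positivity
    have : -(2 * (p:ℝ)) * (((p:ℝ) - 1) * r) = -((p:ℝ) - 1) * ((2 * (p:ℝ)) * r) := by ring
    rw [this, h2p]
    ring
  have e2 : ((1 / a) : ℝ) ^ r = Real.exp 1 := by
    rw [ha_def, one_div, ← Real.exp_neg, neg_neg, ← Real.exp_mul, h2p]
  have step2 : (a ^ (p - 1) * A) ^ r + ((1 / a) * M) ^ r =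
      Real.exp 1 * (Real.exp (-(p:ℝ)) * A ^ r + M ^ r) := by
    rw [Real.mul_rpow (pow_nonneg ha.le _) hAnn, Real.mul_rpow (div_nonneg zero_le_one ha.le) hMnn, e1, e2]
    ring
  calc S ^ r ≤ (a ^ (p - 1) * A) ^ r + ((1 / a) * M) ^ r := step1
    _ = Real.exp 1 * (Real.exp (-(p:ℝ)) * A ^ r + M ^ r) := step2
end

section
/- For nonnegative reals b_{ij} (i,j ∈ [n]) and integers 2 ≤ k ≤ K, we have ∑_i (∑_j b_{ij}^k)^{K/k} ≤ (∑_i (∑_j b_{ij}^2)^{K/2})^{2/k} · (∑_i max_j b_{ij}^K)^{(k-2)/k}. -/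
/-!
Since `b_{ij}^k ≤ b_{ij}^2 (max_j b_{ij})^{k-2}`, the `i`-th summand on the left is at most
`A_i^{2/k} M_i^{1-2/k}` with `A_i = (∑_j b_{ij}^2)^{K/2}` and `M_i = max_j b_{ij}^K`.
Hölder's inequality with the exponents `k/2` and `k/(k-2)`, in the form
`∑ A_i^θ M_i^{1-θ} ≤ (∑ A_i)^θ (∑ M_i)^{1-θ}`, then sums these bounds.
-/

open Real

theorem Real.sum_rpow_mul_rpow_one_sub_le {ι : Type*} (s : Finset ι) {a c : ι → ℝ}
    (ha : ∀ i ∈ s, 0 ≤ a i) (hc : ∀ i ∈ s, 0 ≤ c i) {θ : ℝ} (hθ₀ : 0 ≤ θ) (hθ₁ : θ ≤ 1) :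
    ∑ i ∈ s, a i ^ θ * c i ^ (1 - θ) ≤ (∑ i ∈ s, a i) ^ θ * (∑ i ∈ s, c i) ^ (1 - θ) := by
  rcases hθ₀.eq_or_lt with rfl | hθ₀
  · simp
  rcases hθ₁.eq_or_lt with rfl | hθ₁
  · simp
  have hpq : θ⁻¹.HolderConjugate (1 - θ)⁻¹ :=
    Real.holderConjugate_iff.2 ⟨(one_lt_inv₀ hθ₀).2 hθ₁, by simp⟩
  have rpow_rpow_inv {x t : ℝ} (hx : 0 ≤ x) (ht : 0 < t) : (x ^ t) ^ t⁻¹ = x := by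
    rw [← rpow_mul hx, mul_inv_cancel₀ ht.ne', rpow_one]
  convert inner_le_Lp_mul_Lq_of_nonneg s hpq (fun i hi => rpow_nonneg (ha i hi) θ)
    (fun i hi => rpow_nonneg (hc i hi) (1 - θ)) using 3
  · exact Finset.sum_congr rfl fun i hi => (rpow_rpow_inv (ha i hi) hθ₀).symm
  · simp
  · exact Finset.sum_congr rfl fun i hi => (rpow_rpow_inv (hc i hi) (sub_pos.2 hθ₁)).symm
  · simp

theorem Real.sum_pow_le_sum_pow_mul_iSup_pow {ι : Type*} [Fintype ι] {f : ι → ℝ}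
    (hf : ∀ i, 0 ≤ f i) {m k : ℕ} (hmk : m ≤ k) :
    ∑ i, f i ^ k ≤ (∑ i, f i ^ m) * (⨆ i, f i) ^ (k - m) := by
  rw [Finset.sum_mul]
  refine Finset.sum_le_sum fun i _ => ?_
  rw [← pow_mul_pow_sub _ hmk]
  have := hf i
  gcongr
  exact le_ciSup (Finite.bddAbove_range f) i

theorem Real.rpow_sum_pow_le_mul_iSup_pow {ι : Type*} [Fintype ι] [Nonempty ι] {f : ι → ℝ}
    (hf : ∀ i, 0 ≤ f i) {k : ℕ} (hk : 2 ≤ k) (K : ℕ) :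
    (∑ i, f i ^ k) ^ ((K : ℝ) / k) ≤
      ((∑ i, f i ^ 2) ^ ((K : ℝ) / 2)) ^ (2 / (k : ℝ)) * (⨆ i, f i ^ K) ^ (1 - 2 / (k : ℝ)) := by
  have hk₀ : (k : ℝ) ≠ 0 := by positivity
  have hA : 0 ≤ ∑ i, f i ^ 2 := Finset.sum_nonneg fun i _ => sq_nonneg (f i)
  have hS : 0 ≤ ⨆ i, f i := Real.iSup_nonneg hf
  calc (∑ i, f i ^ k) ^ ((K : ℝ) / k)
      ≤ ((∑ i, f i ^ 2) * (⨆ i, f i) ^ (k - 2)) ^ ((K : ℝ) / k) := by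
        gcongr
        · exact Finset.sum_nonneg fun i _ => pow_nonneg (hf i) k
        · exact sum_pow_le_sum_pow_mul_iSup_pow hf hk
    _ = ((∑ i, f i ^ 2) ^ ((K : ℝ) / 2)) ^ (2 / (k : ℝ)) *
          ((⨆ i, f i) ^ K) ^ (1 - 2 / (k : ℝ)) := by
        rw [mul_rpow hA (by positivity), ← rpow_mul hA, ← rpow_natCast, ← rpow_natCast _ K,
          ← rpow_mul hS, ← rpow_mul hS, Nat.cast_sub hk]
        congr 2 <;> field_simp
        ring
    _ = _ := by rw [Real.iSup_pow hf]

theorem stmt2_general {n : ℕ} (k K : ℕ) (hk : 2 ≤ k)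
    (b : Matrix (Fin n) (Fin n) ℝ) (hb : ∀ i j, 0 ≤ b i j) :
    ∑ i, (∑ j, b i j ^ k) ^ ((K : ℝ) / k) ≤
      (∑ i, (∑ j, b i j ^ 2) ^ ((K : ℝ) / 2)) ^ (2 / (k : ℝ)) *
        (∑ i, ⨆ j, b i j ^ K) ^ (((k : ℝ) - 2) / k) := by
  have hk' : (2 : ℝ) ≤ k := mod_cast hk
  rw [show ((k : ℝ) - 2) / k = 1 - 2 / k by field_simp]
  calc ∑ i, (∑ j, b i j ^ k) ^ ((K : ℝ) / k)
      ≤ ∑ i, ((∑ j, b i j ^ 2) ^ ((K : ℝ) / 2)) ^ (2 / (k : ℝ)) *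
          (⨆ j, b i j ^ K) ^ (1 - 2 / (k : ℝ)) :=
        Finset.sum_le_sum fun i _ =>
          have : Nonempty (Fin n) := ⟨i⟩
          rpow_sum_pow_le_mul_iSup_pow (hb i) hk K
    _ ≤ _ :=
        sum_rpow_mul_rpow_one_sub_le _
          (fun i _ => rpow_nonneg (Finset.sum_nonneg fun j _ => sq_nonneg (b i j)) _)
          (fun i _ => Real.iSup_nonneg fun j => pow_nonneg (hb i j) K)
          (by positivity) ((div_le_one (by positivity)).2 hk')

/-- For nonnegative `b_{ij}` and integers `2 ≤ k ≤ K`,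
`∑_i (∑_j b_{ij}^k)^{K/k} ≤ (∑_i (∑_j b_{ij}^2)^{K/2})^{2/k} (∑_i max_j b_{ij}^K)^{(k-2)/k}`. -/
theorem stmt2 {n : ℕ} (k K : ℕ) (hk : 2 ≤ k) (hK : k ≤ K)
    (b : Matrix (Fin n) (Fin n) ℝ) (hb : ∀ i j, 0 ≤ b i j) :
    ∑ i, (∑ j, b i j ^ k) ^ ((K : ℝ) / k) ≤
      (∑ i, (∑ j, b i j ^ 2) ^ ((K : ℝ) / 2)) ^ (2 / (k : ℝ)) *
        (∑ i, ⨆ j, b i j ^ K) ^ (((k : ℝ) - 2) / k) :=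
  stmt2_general k K hk b hb
end

section
/- Let G be a tree on vertex set [m] (m ≥ 2), and for each edge e of G let b^{(e)} be an n×n matrix with nonnegative entries. Let p_e ≥ 1 be reals with ∑_{e ∈ E(G)} 1/p_e = 1. Then ∑_{v ∈ [n]^m} ∏_{e ∈ E(G)} b^{(e)}_{v(e)} ≤ ∏_{e ∈ E(G)} (∑_i (∑_j b^{(e)}_{ij})^{p_e})^{1/p_e}, where for an edge e = {a,b} we write b^{(e)}_{v(e)} = b^{(e)}_{v_a v_b}. -/
open Real

/-- The value `b^{(e)}_{v(e)}` of the symmetric edge matrix `B e` at the pair of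
indices assigned by `v` to the endpoints of the edge `e`. -/
noncomputable def edgeVal {m n : ℕ} (B : Sym2 (Fin m) → Matrix (Fin n) (Fin n) ℝ)
    (hBsym : ∀ e i j, B e i j = B e j i) (v : Fin m → Fin n) (e : Sym2 (Fin m)) : ℝ :=
  Sym2.lift ⟨fun a c => B e (v a) (v c), fun a c => hBsym e (v a) (v c)⟩ e

/-!
Root the tree at `r` and peel off leaves one at a time. Along the way every vertex `x` carries a
weight `c x`, measured in `ℓ^{1/t x}`, and the edge from `x` to its parent carries the exponent
`q x = 1 / p_e`, with `∑ t + ∑ q = 1`; initially every weight is `1`, with exponent `0`.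
Summing out the label of a leaf `ℓ` with parent `u` replaces `c u` by `c u * (c ℓ ᵥ* M ℓ)` and
`t u` by `t u + t ℓ + q ℓ`. By Hölder's inequality and the estimate
`‖c ᵥ* M‖_{1/(t+q)} ≤ ‖c‖_{1/t} ‖M *ᵥ 1‖_{1/q}` for symmetric nonnegative `M` (proved by duality
from a trilinear Hölder bound), the product of the norms does not increase. When only the root
is left, its exponent is `1` and its norm is the sum itself.
-/

open Finset Function

namespace BrascampLiebTree

section Holder

variable {ι : Type*} [Fintype ι]

theorem inner_le_weight_mul_Lp_mul_Lq {w f g : ι → ℝ} (hw : ∀ i, 0 ≤ w i) (hf : ∀ i, 0 ≤ f i)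
    (hg : ∀ i, 0 ≤ g i) {α β : ℝ} (hα : 0 < α) (hβ : 0 < β) (hαβ : α + β = 1) :
    ∑ i, w i * (f i * g i) ≤ (∑ i, w i * f i ^ α⁻¹) ^ α * (∑ i, w i * g i ^ β⁻¹) ^ β := by
  have hconj : α⁻¹.HolderConjugate β⁻¹ := ⟨by simp [hαβ], inv_pos.2 hα, inv_pos.2 hβ⟩
  have split (i : ι) : w i * (f i * g i) = (w i ^ α * f i) * (w i ^ β * g i) := by
    rw [mul_mul_mul_comm, ← rpow_add' (hw i) (by simp [hαβ]), hαβ, rpow_one]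
  have absorb (i : ι) {γ : ℝ} (hγ : 0 < γ) {h : ι → ℝ} (hh : ∀ i, 0 ≤ h i) :
      (w i ^ γ * h i) ^ γ⁻¹ = w i * h i ^ γ⁻¹ := by
    rw [mul_rpow (rpow_nonneg (hw i) _) (hh i), ← rpow_mul (hw i), mul_inv_cancel₀ hγ.ne',
      rpow_one]
  have key := inner_le_Lp_mul_Lq_of_nonneg univ hconj
    (fun i _ => mul_nonneg (rpow_nonneg (hw i) α) (hf i))
    (fun i _ => mul_nonneg (rpow_nonneg (hw i) β) (hg i))
  simpa only [← split, absorb _ hα hf, absorb _ hβ hg, one_div, inv_inv] using key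

/-- `recipNorm t c` is the `ℓ^{1/t}` norm of a nonnegative `c`: parametrising by the reciprocal
exponent makes the exponents of Hölder's inequality add up. For `t = 0` its value is `1`, the
sup norm of the constant weight `1` it is used with. -/
noncomputable def recipNorm (t : ℝ) (c : ι → ℝ) : ℝ :=
  (∑ i, c i ^ t⁻¹) ^ t

theorem recipNorm_nonneg {t : ℝ} {c : ι → ℝ} (hc : ∀ i, 0 ≤ c i) : 0 ≤ recipNorm t c :=
  rpow_nonneg (sum_nonneg fun i _ => rpow_nonneg (hc i) _) _

@[simp]
theorem recipNorm_zero (c : ι → ℝ) : recipNorm 0 c = 1 :=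
  rpow_zero _

theorem recipNorm_one (c : ι → ℝ) : recipNorm 1 c = ∑ i, c i := by
  simp [recipNorm]

theorem recipNorm_rpow {s a : ℝ} (ha : 0 < a) {c : ι → ℝ} (hc : ∀ i, 0 ≤ c i) :
    recipNorm s (fun i => c i ^ a) = recipNorm (s / a) c ^ a := by
  have hsum : 0 ≤ ∑ i, c i ^ (s / a)⁻¹ := sum_nonneg fun i _ => rpow_nonneg (hc i) _
  rw [recipNorm, recipNorm, ← rpow_mul hsum, div_mul_cancel₀ s ha.ne']
  congr 1
  refine sum_congr rfl fun i _ => ?_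
  rw [← rpow_mul (hc i), inv_div, div_eq_mul_inv]

theorem recipNorm_mul_le {s t : ℝ} {f g : ι → ℝ} (hs : 0 ≤ s) (ht : 0 < t)
    (hf : ∀ i, 0 ≤ f i) (hg : ∀ i, 0 ≤ g i) (hf1 : s = 0 → f = 1) :
    recipNorm (s + t) (f * g) ≤ recipNorm s f * recipNorm t g := by
  rcases hs.eq_or_lt with rfl | hs
  · simp [hf1 rfl]
  have hst : 0 < s + t := by positivity
  have htriple : s⁻¹.HolderTriple t⁻¹ (s + t)⁻¹ :=
    ⟨by simp, inv_pos.2 hs, inv_pos.2 ht⟩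
  have key := Real.Lr_rpow_le_Lp_mul_Lq_of_nonneg univ htriple (fun i _ => hf i)
    (fun i _ => hg i)
  have hA : 0 ≤ ∑ i, f i ^ s⁻¹ := sum_nonneg fun i _ => rpow_nonneg (hf i) _
  have hB : 0 ≤ ∑ i, g i ^ t⁻¹ := sum_nonneg fun i _ => rpow_nonneg (hg i) _
  calc recipNorm (s + t) (f * g) = (∑ i, (f i * g i) ^ (s + t)⁻¹) ^ (s + t) := rfl
    _ ≤ ((∑ i, f i ^ s⁻¹) ^ ((s + t)⁻¹ / s⁻¹) * (∑ i, g i ^ t⁻¹) ^ ((s + t)⁻¹ / t⁻¹))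
          ^ (s + t) :=
      rpow_le_rpow (sum_nonneg fun i _ => rpow_nonneg (mul_nonneg (hf i) (hg i)) _) key hst.le
    _ = recipNorm s f * recipNorm t g := by
      rw [mul_rpow (rpow_nonneg hA _) (rpow_nonneg hB _), ← rpow_mul hA, ← rpow_mul hB]
      congr 2 <;> field_simp

theorem sum_mul_rpow_le {q a : ℝ} (hq : 0 < q) (hq1 : q < 1) (ha : 0 < a) {R c : ι → ℝ}
    (hR : ∀ i, 0 ≤ R i) (hc : ∀ i, 0 ≤ c i) :
    (∑ i, R i * c i ^ a⁻¹) ^ a ≤ recipNorm q R ^ a * recipNorm ((1 - q) * a) c := by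
  have hholder := recipNorm_mul_le hq.le (sub_pos.2 hq1) hR
    (fun i => rpow_nonneg (hc i) a⁻¹) (fun h => absurd h hq.ne')
  rw [add_sub_cancel, recipNorm_one, recipNorm_rpow (inv_pos.2 ha) hc, div_inv_eq_mul] at hholder
  calc (∑ i, R i * c i ^ a⁻¹) ^ a
      ≤ (recipNorm q R * recipNorm ((1 - q) * a) c ^ a⁻¹) ^ a :=
        rpow_le_rpow (sum_nonneg fun i _ => mul_nonneg (hR i) (rpow_nonneg (hc i) _))
          hholder ha.le
    _ = recipNorm q R ^ a * recipNorm ((1 - q) * a) c := by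
      rw [mul_rpow (recipNorm_nonneg hR) (rpow_nonneg (recipNorm_nonneg hc) _),
        ← rpow_mul (recipNorm_nonneg hc), inv_mul_cancel₀ ha.ne', rpow_one]

theorem rpow_le_of_le_mul_rpow {X K a : ℝ} (hX : 0 ≤ X) (hK : 0 ≤ K) (ha : 0 < a)
    (h : X ≤ K * X ^ (1 - a)) : X ^ a ≤ K := by
  rcases hX.eq_or_lt with rfl | hX
  · rwa [zero_rpow ha.ne']
  calc X ^ a = X * X ^ (a - 1) := by rw [← rpow_one_add' hX.le (by linarith), add_sub_cancel]
    _ ≤ K * X ^ (1 - a) * X ^ (a - 1) := mul_le_mul_of_nonneg_right h (rpow_nonneg hX.le _)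
    _ = K := by rw [mul_assoc, ← rpow_add hX, sub_add_sub_cancel, sub_self, rpow_zero, mul_one]

theorem sum_sum_mul_mul_le {t₁ t₂ q : ℝ} (h₁ : 0 < t₁) (h₂ : 0 < t₂) (hq : 0 < q)
    (hsum : t₁ + t₂ + q = 1) {M : ι → ι → ℝ} (hM : ∀ i j, 0 ≤ M i j)
    (hMs : ∀ i j, M i j = M j i) {c g : ι → ℝ} (hc : ∀ i, 0 ≤ c i) (hg : ∀ i, 0 ≤ g i) :
    ∑ j, ∑ i, M j i * (c j * g i) ≤
      recipNorm t₁ c * recipNorm t₂ g * recipNorm q (fun i => ∑ j, M i j) := by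
  set R : ι → ℝ := fun i => ∑ j, M i j
  have hR (i : ι) : 0 ≤ R i := sum_nonneg fun j _ => hM i j
  have hq1 : q < 1 := by linarith
  have h1q : 0 < 1 - q := by linarith
  set α := t₁ / (1 - q)
  set β := t₂ / (1 - q)
  have hα : 0 < α := div_pos h₁ h1q
  have hβ : 0 < β := div_pos h₂ h1q
  have hαβ : α + β = 1 := by
    rw [← add_div, div_eq_one_iff_eq h1q.ne']
    linarith
  have hpairs := inner_le_weight_mul_Lp_mul_Lq (ι := ι × ι) (w := fun p => M p.1 p.2)
    (f := fun p => c p.1) (g := fun p => g p.2) (fun p => hM _ _) (fun p => hc _)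
    (fun p => hg _) hα hβ hαβ
  simp only [Fintype.sum_prod_type] at hpairs
  have hcR : ∑ j, ∑ i, M j i * c j ^ α⁻¹ = ∑ j, R j * c j ^ α⁻¹ := by
    simp only [R, sum_mul]
  have hgR : ∑ j, ∑ i, M j i * g i ^ β⁻¹ = ∑ i, R i * g i ^ β⁻¹ := by
    rw [sum_comm]
    refine sum_congr rfl fun i _ => ?_
    rw [sum_mul]
    exact sum_congr rfl fun j _ => by rw [hMs]
  have hcα := sum_mul_rpow_le hq hq1 hα hR hc
  have hgβ := sum_mul_rpow_le hq hq1 hβ hR hg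
  rw [mul_div_cancel₀ _ h1q.ne'] at hcα hgβ
  have hN := recipNorm_nonneg (t := q) hR
  calc ∑ j, ∑ i, M j i * (c j * g i)
      ≤ (∑ j, R j * c j ^ α⁻¹) ^ α * (∑ i, R i * g i ^ β⁻¹) ^ β := by
        rwa [← hcR, ← hgR]
    _ ≤ (recipNorm q R ^ α * recipNorm t₁ c) * (recipNorm q R ^ β * recipNorm t₂ g) :=
        mul_le_mul hcα hgβ
          (rpow_nonneg (sum_nonneg fun i _ => mul_nonneg (hR i) (rpow_nonneg (hg i) _)) _)
          (mul_nonneg (rpow_nonneg hN _) (recipNorm_nonneg hc))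
    _ = recipNorm t₁ c * recipNorm t₂ g * recipNorm q R ^ (α + β) := by
        rw [rpow_add' hN (by rw [hαβ]; norm_num)]
        ring
    _ = recipNorm t₁ c * recipNorm t₂ g * recipNorm q R := by rw [hαβ, rpow_one]

theorem recipNorm_sum_mul_le {t q : ℝ} (ht : 0 ≤ t) (hq : 0 < q) (htq : t + q ≤ 1)
    {M : ι → ι → ℝ} (hM : ∀ i j, 0 ≤ M i j) (hMs : ∀ i j, M i j = M j i) {c : ι → ℝ}
    (hc : ∀ i, 0 ≤ c i) (hc1 : t = 0 → c = 1) :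
    recipNorm (t + q) (fun i => ∑ j, c j * M j i) ≤
      recipNorm t c * recipNorm q (fun i => ∑ j, M i j) := by
  have hR (i : ι) : 0 ≤ ∑ j, M i j := sum_nonneg fun j _ => hM i j
  rcases ht.eq_or_lt with rfl | ht
  · simp only [hc1 rfl, Pi.one_apply, one_mul, zero_add, recipNorm_zero]
    exact le_of_eq (congrArg _ (funext fun i => sum_congr rfl fun j _ => hMs j i))
  rcases htq.eq_or_lt with htq | htq
  · have hholder := recipNorm_mul_le ht.le hq hc hR (fun h => absurd h ht.ne')
    rw [htq, recipNorm_one] at hholder ⊢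
    rw [sum_comm]
    simpa only [Pi.mul_apply, mul_sum] using hholder
  have hs : 0 < t + q := by positivity
  set d : ι → ℝ := fun i => ∑ j, c j * M j i
  have hd (i : ι) : 0 ≤ d i := sum_nonneg fun j _ => mul_nonneg (hc j) (hM j i)
  set X := ∑ i, d i ^ (t + q)⁻¹
  have hX : 0 ≤ X := sum_nonneg fun i _ => rpow_nonneg (hd i) _
  have hr : 0 < (t + q)⁻¹ - 1 := sub_pos.2 ((one_lt_inv₀ hs).2 htq)
  -- duality: pair `d` with `d ^ (r - 1)`, where `r = (t + q)⁻¹`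
  have hdual : X = ∑ j, ∑ i, M j i * (c j * d i ^ ((t + q)⁻¹ - 1)) := by
    calc X = ∑ i, d i * d i ^ ((t + q)⁻¹ - 1) :=
          sum_congr rfl fun i _ => by rw [← rpow_one_add' (hd i) (by linarith), add_sub_cancel]
      _ = _ := by
          rw [sum_comm]
          refine sum_congr rfl fun i _ => ?_
          rw [sum_mul]
          exact sum_congr rfl fun j _ => by ring
  have hgX : recipNorm (1 - (t + q)) (fun i => d i ^ ((t + q)⁻¹ - 1)) = X ^ (1 - (t + q)) := by
    have hexp : (1 - (t + q)) / ((t + q)⁻¹ - 1) = t + q := by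
      field_simp
    rw [recipNorm_rpow hr hd, hexp, recipNorm, ← rpow_mul hX]
    congr 1
    field_simp
  have key := sum_sum_mul_mul_le ht (sub_pos.2 htq) hq (by ring) hM hMs hc
    (fun i => rpow_nonneg (hd i) ((t + q)⁻¹ - 1))
  rw [← hdual, hgX] at key
  exact rpow_le_of_le_mul_rpow hX (mul_nonneg (recipNorm_nonneg hc) (recipNorm_nonneg hR)) hs
    (by linarith)

theorem recipNorm_mul_sum_mul_le {s t q : ℝ} (hs : 0 ≤ s) (ht : 0 ≤ t) (hq : 0 < q)
    (hstq : s + (t + q) ≤ 1) {M : ι → ι → ℝ} (hM : ∀ i j, 0 ≤ M i j)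
    (hMs : ∀ i j, M i j = M j i) {b c : ι → ℝ} (hb : ∀ i, 0 ≤ b i) (hc : ∀ i, 0 ≤ c i)
    (hb1 : s = 0 → b = 1) (hc1 : t = 0 → c = 1) :
    recipNorm (s + (t + q)) (b * fun i => ∑ j, c j * M j i) ≤
      recipNorm s b * (recipNorm t c * recipNorm q (fun i => ∑ j, M i j)) :=
  (recipNorm_mul_le hs (by positivity) hb
      (fun i => sum_nonneg fun j _ => mul_nonneg (hc j) (hM j i)) hb1).trans
    (mul_le_mul_of_nonneg_left
      (recipNorm_sum_mul_le ht hq (by linarith) hM hMs hc hc1) (recipNorm_nonneg hb))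

end Holder

section Marginal

variable {V ι : Type*} [Fintype V] [DecidableEq V] [Fintype ι]

theorem card_mul_sum_apply_eq_card_pow_mul (ℓ : V) (F : ι → (V → ι) → ℝ)
    (hF : ∀ j v k, F j (update v ℓ k) = F j v) :
    Fintype.card ι * ∑ v : V → ι, F (v ℓ) v = ∑ v : V → ι, ∑ j, F j v := by
  -- `(v, j) ↦ (update v ℓ j, v ℓ)` is an involution exchanging the label of `ℓ` with `j`
  let φ : (V → ι) × ι → (V → ι) × ι := fun p => (update p.1 ℓ p.2, p.1 ℓ)
  have hφ : Involutive φ := fun p => by simp [φ]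
  calc (Fintype.card ι : ℝ) * ∑ v : V → ι, F (v ℓ) v
      = ∑ p : (V → ι) × ι, F (p.1 ℓ) p.1 := by
        simp [Fintype.sum_prod_type, mul_sum]
    _ = ∑ p : (V → ι) × ι, F p.2 p.1 :=
        Fintype.sum_bijective φ hφ.bijective _ _ fun p => by simp [φ, hF]
    _ = ∑ v : V → ι, ∑ j, F j v := Fintype.sum_prod_type _

theorem sum_apply_eq_card_pow_mul [Nonempty ι] (r : V) (f : ι → ℝ) :
    ∑ v : V → ι, f (v r) = Fintype.card ι ^ ({r}ᶜ : Finset V).card * ∑ i, f i := by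
  have hcard : (Fintype.card ι : ℝ) ≠ 0 := by exact_mod_cast Fintype.card_ne_zero
  have h := card_mul_sum_apply_eq_card_pow_mul r (fun j _ => f j) fun _ _ _ => rfl
  have hV : Fintype.card V = ({r}ᶜ : Finset V).card + 1 := by
    rw [card_compl, card_singleton]
    have := Fintype.card_pos_iff.2 ⟨r⟩
    omega
  rw [sum_const, card_univ, Fintype.card_fun, nsmul_eq_mul, Nat.cast_pow, hV, pow_succ',
    mul_assoc] at h
  exact mul_left_cancel₀ hcard h

end Marginal

section RootedTree

variable {V ι : Type*} [DecidableEq V] (r : V) (P : V → V)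

theorem exists_leaf {D : V → ℕ} (hD : ∀ x ≠ r, D (P x) < D x) {S : Finset V}
    (hS : (S.erase r).Nonempty) : ∃ ℓ ∈ S.erase r, ∀ x ∈ S.erase r, P x ≠ ℓ := by
  obtain ⟨ℓ, hℓ, hmax⟩ := exists_max_image (S.erase r) D hS
  refine ⟨ℓ, hℓ, fun x hx hxℓ => ?_⟩
  subst hxℓ
  exact (hD x (ne_of_mem_erase hx)).not_ge (hmax x hx)

theorem prod_update_mul_apply {s : Finset V} {u : V} (hu : u ∈ s) (c : V → ι → ℝ)
    (d : ι → ℝ) (v : V → ι) :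
    ∏ x ∈ s, update c u (c u * d) x (v x) = (∏ x ∈ s, c x (v x)) * d (v u) := by
  rw [← mul_prod_erase s _ hu, ← mul_prod_erase s (fun x => c x (v x)) hu, update_self,
    prod_congr rfl fun x hx => by rw [update_of_ne (ne_of_mem_erase hx)], Pi.mul_apply]
  ring

variable (q : V → ℝ)

structure Admissible (S : Finset V) (t : V → ℝ) (c : V → ι → ℝ) : Prop where
  root_mem : r ∈ S
  parent_mem : ∀ x ∈ S.erase r, P x ∈ S
  weight_nonneg : ∀ x i, 0 ≤ c x i
  exponent_nonneg : ∀ x, 0 ≤ t x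
  weight_eq_one : ∀ x, t x = 0 → c x = 1
  exponent_sum : ∑ x ∈ S, t x + ∑ x ∈ S.erase r, q x = 1

variable {r P q}

theorem Admissible.exponent_le_one {S : Finset V} {t : V → ℝ} {c : V → ι → ℝ}
    (h : Admissible r P q S t c) (hq : ∀ x ≠ r, 0 < q x) {x : V} (hx : x ∈ S) : t x ≤ 1 := by
  have hle := single_le_sum (fun y _ => h.exponent_nonneg y) hx
  have hrest : 0 ≤ ∑ y ∈ S.erase r, q y := sum_nonneg fun y hy => (hq y (ne_of_mem_erase hy)).le
  linarith [h.exponent_sum]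

variable (r P q) [Fintype ι] (M : V → ι → ι → ℝ)

noncomputable def treeSum [Fintype V] (S : Finset V) (c : V → ι → ℝ) : ℝ :=
  ∑ v : V → ι, (∏ x ∈ S, c x (v x)) * ∏ x ∈ S.erase r, M x (v x) (v (P x))

noncomputable def treeBound (S : Finset V) (t : V → ℝ) (c : V → ι → ℝ) : ℝ :=
  (∏ x ∈ S, recipNorm (t x) (c x)) * ∏ x ∈ S.erase r, recipNorm (q x) fun i => ∑ j, M x i j

noncomputable def peelWeight (c : V → ι → ℝ) (ℓ : V) : V → ι → ℝ :=
  update c (P ℓ) (c (P ℓ) * fun i => ∑ j, c ℓ j * M ℓ j i)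

noncomputable def peelExponent (t : V → ℝ) (ℓ : V) : V → ℝ :=
  update t (P ℓ) (t (P ℓ) + (t ℓ + q ℓ))

variable {r P M q}

theorem Admissible.peel {S : Finset V} {t : V → ℝ} {c : V → ι → ℝ} (h : Admissible r P q S t c)
    (hq : ∀ x ≠ r, 0 < q x) (hM : ∀ x i j, 0 ≤ M x i j) {ℓ : V} (hℓ : ℓ ∈ S.erase r)
    (hleaf : ∀ x ∈ S.erase r, P x ≠ ℓ) :
    Admissible r P q (S.erase ℓ) (peelExponent P q t ℓ) (peelWeight P M c ℓ) where
  root_mem := mem_erase.2 ⟨(ne_of_mem_erase hℓ).symm, h.root_mem⟩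
  parent_mem x hx := by
    have hx' : x ∈ S.erase r :=
      mem_erase.2 ⟨ne_of_mem_erase hx, mem_of_mem_erase (mem_of_mem_erase hx)⟩
    exact mem_erase.2 ⟨hleaf x hx', h.parent_mem x hx'⟩
  weight_nonneg x i := by
    rcases eq_or_ne x (P ℓ) with rfl | hx
    · rw [peelWeight, update_self]
      exact mul_nonneg (h.weight_nonneg _ i)
        (sum_nonneg fun j _ => mul_nonneg (h.weight_nonneg ℓ j) (hM ℓ j i))
    · rw [peelWeight, update_of_ne hx]
      exact h.weight_nonneg x i
  exponent_nonneg x := by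
    have := h.exponent_nonneg ℓ
    have := (hq ℓ (ne_of_mem_erase hℓ)).le
    rcases eq_or_ne x (P ℓ) with rfl | hx
    · rw [peelExponent, update_self]
      have := h.exponent_nonneg (P ℓ)
      positivity
    · rw [peelExponent, update_of_ne hx]
      exact h.exponent_nonneg x
  weight_eq_one x hx := by
    rcases eq_or_ne x (P ℓ) with rfl | hxu
    · rw [peelExponent, update_self] at hx
      have := h.exponent_nonneg (P ℓ)
      have := h.exponent_nonneg ℓ
      have := hq ℓ (ne_of_mem_erase hℓ)
      linarith
    · rw [peelExponent, update_of_ne hxu] at hx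
      rw [peelWeight, update_of_ne hxu]
      exact h.weight_eq_one x hx
  exponent_sum := by
    have hu : P ℓ ∈ S.erase ℓ := mem_erase.2 ⟨hleaf ℓ hℓ, h.parent_mem ℓ hℓ⟩
    rw [← h.exponent_sum, peelExponent, sum_update_of_mem hu,
      ← add_sum_erase S t (mem_of_mem_erase hℓ), sum_eq_add_sum_sdiff_singleton_of_mem hu t,
      ← add_sum_erase (S.erase r) q hℓ, erase_right_comm]
    ring

theorem treeBound_peel_le {S : Finset V} {t : V → ℝ} {c : V → ι → ℝ}
    (h : Admissible r P q S t c) (hq : ∀ x ≠ r, 0 < q x) (hM : ∀ x i j, 0 ≤ M x i j)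
    (hMs : ∀ x i j, M x i j = M x j i) {ℓ : V} (hℓ : ℓ ∈ S.erase r)
    (hleaf : ∀ x ∈ S.erase r, P x ≠ ℓ) :
    treeBound r q M (S.erase ℓ) (peelExponent P q t ℓ) (peelWeight P M c ℓ) ≤
      treeBound r q M S t c := by
  set u := P ℓ
  set d : ι → ℝ := fun i => ∑ j, c ℓ j * M ℓ j i
  set N : V → ℝ := fun x => recipNorm (q x) fun i => ∑ j, M x i j
  have hu : u ∈ S.erase ℓ := mem_erase.2 ⟨hleaf ℓ hℓ, h.parent_mem ℓ hℓ⟩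
  have hqℓ := hq ℓ (ne_of_mem_erase hℓ)
  have hbudget := (h.peel hq hM hℓ hleaf).exponent_le_one hq hu
  rw [peelExponent, update_self] at hbudget
  have hlocal := recipNorm_mul_sum_mul_le (h.exponent_nonneg u) (h.exponent_nonneg ℓ) hqℓ
    hbudget (hM ℓ) (hMs ℓ) (h.weight_nonneg u) (h.weight_nonneg ℓ) (h.weight_eq_one u)
    (h.weight_eq_one ℓ)
  have hpeeled : ∏ x ∈ S.erase ℓ, recipNorm (peelExponent P q t ℓ x) (peelWeight P M c ℓ x) =
      recipNorm (t u + (t ℓ + q ℓ)) (c u * d) *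
        ∏ x ∈ (S.erase ℓ).erase u, recipNorm (t x) (c x) := by
    rw [← mul_prod_erase _ _ hu, peelExponent, peelWeight, update_self, update_self]
    congr 1
    exact prod_congr rfl fun x hx => by
      rw [update_of_ne (ne_of_mem_erase hx), update_of_ne (ne_of_mem_erase hx)]
  have hvertices : ∏ x ∈ S, recipNorm (t x) (c x) = recipNorm (t ℓ) (c ℓ) *
      (recipNorm (t u) (c u) * ∏ x ∈ (S.erase ℓ).erase u, recipNorm (t x) (c x)) := by
    rw [mul_prod_erase (S.erase ℓ) (fun x => recipNorm (t x) (c x)) hu,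
      mul_prod_erase S (fun x => recipNorm (t x) (c x)) (mem_of_mem_erase hℓ)]
  have hedges : ∏ x ∈ S.erase r, N x = N ℓ * ∏ x ∈ (S.erase ℓ).erase r, N x := by
    rw [← erase_right_comm, mul_prod_erase (S.erase r) N hℓ]
  have hrestV : 0 ≤ ∏ x ∈ (S.erase ℓ).erase u, recipNorm (t x) (c x) :=
    prod_nonneg fun x _ => recipNorm_nonneg (h.weight_nonneg x)
  have hrestE : 0 ≤ ∏ x ∈ (S.erase ℓ).erase r, N x :=
    prod_nonneg fun x _ => recipNorm_nonneg fun i => sum_nonneg fun j _ => hM x i j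
  rw [treeBound, treeBound, hpeeled, hvertices, hedges]
  calc recipNorm (t u + (t ℓ + q ℓ)) (c u * d) *
        (∏ x ∈ (S.erase ℓ).erase u, recipNorm (t x) (c x)) * ∏ x ∈ (S.erase ℓ).erase r, N x
      ≤ recipNorm (t u) (c u) * (recipNorm (t ℓ) (c ℓ) * N ℓ) *
        (∏ x ∈ (S.erase ℓ).erase u, recipNorm (t x) (c x)) * ∏ x ∈ (S.erase ℓ).erase r, N x :=
        mul_le_mul_of_nonneg_right (mul_le_mul_of_nonneg_right hlocal hrestV) hrestE
    _ = _ := by ring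

variable [Fintype V]

theorem card_mul_treeSum {S : Finset V} {ℓ : V} (hℓ : ℓ ∈ S.erase r)
    (hleaf : ∀ x ∈ S.erase r, P x ≠ ℓ) (hu : P ℓ ∈ S) (c : V → ι → ℝ) :
    Fintype.card ι * treeSum r P M S c = treeSum r P M (S.erase ℓ) (peelWeight P M c ℓ) := by
  have hℓS := mem_of_mem_erase hℓ
  have huℓ : P ℓ ≠ ℓ := hleaf ℓ hℓ
  let F : ι → (V → ι) → ℝ := fun j v =>
    ((∏ x ∈ S.erase ℓ, c x (v x)) * ∏ x ∈ (S.erase ℓ).erase r, M x (v x) (v (P x))) *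
      (c ℓ j * M ℓ j (v (P ℓ)))
  have hsplit (v : V → ι) :
      (∏ x ∈ S, c x (v x)) * ∏ x ∈ S.erase r, M x (v x) (v (P x)) = F (v ℓ) v := by
    rw [← mul_prod_erase S _ hℓS, ← mul_prod_erase (S.erase r) _ hℓ, erase_right_comm]
    ring
  have hF (j : ι) (v : V → ι) (k : ι) : F j (update v ℓ k) = F j v := by
    simp only [F, update_of_ne huℓ]
    congr 2
    · exact prod_congr rfl fun x hx => by rw [update_of_ne (ne_of_mem_erase hx)]
    · refine prod_congr rfl fun x hx => ?_
      have hxS := mem_of_mem_erase hx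
      rw [update_of_ne (ne_of_mem_erase hxS),
        update_of_ne (hleaf x (mem_erase.2 ⟨ne_of_mem_erase hx, mem_of_mem_erase hxS⟩))]
  have hmerge (v : V → ι) : ∑ j, F j v =
      (∏ x ∈ S.erase ℓ, peelWeight P M c ℓ x (v x)) *
        ∏ x ∈ (S.erase ℓ).erase r, M x (v x) (v (P x)) := by
    rw [peelWeight, prod_update_mul_apply (mem_erase.2 ⟨huℓ, hu⟩)]
    simp only [F, ← mul_sum]
    ring
  simp only [treeSum, hsplit, card_mul_sum_apply_eq_card_pow_mul ℓ F hF, hmerge]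

theorem treeSum_le [Nonempty ι] {D : V → ℕ} (hD : ∀ x ≠ r, D (P x) < D x)
    (hq : ∀ x ≠ r, 0 < q x) (hM : ∀ x i j, 0 ≤ M x i j) (hMs : ∀ x i j, M x i j = M x j i)
    {S : Finset V} {t : V → ℝ} {c : V → ι → ℝ} (h : Admissible r P q S t c) :
    treeSum r P M S c ≤ Fintype.card ι ^ Sᶜ.card * treeBound r q M S t c := by
  induction S using Finset.strongInduction generalizing t c with
  | H S ih =>
  rcases (S.erase r).eq_empty_or_nonempty with hS | hS
  · obtain rfl : S = {r} :=
      (erase_eq_empty_iff S r).1 hS |>.resolve_left (ne_empty_of_mem h.root_mem)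
    have ht : t r = 1 := by simpa using h.exponent_sum
    simp [treeSum, treeBound, ht, recipNorm_one, sum_apply_eq_card_pow_mul]
  · obtain ⟨ℓ, hℓ, hleaf⟩ := exists_leaf r P hD hS
    have hcard : (0 : ℝ) < Fintype.card ι := by exact_mod_cast Fintype.card_pos
    have hIH := ih (S.erase ℓ) (erase_ssubset (mem_of_mem_erase hℓ)) (h.peel hq hM hℓ hleaf)
    rw [← card_mul_treeSum hℓ hleaf (h.parent_mem ℓ hℓ), compl_erase,
      card_insert_of_notMem (notMem_compl.2 (mem_of_mem_erase hℓ)), pow_succ] at hIH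
    refine le_of_mul_le_mul_left ?_ hcard
    calc Fintype.card ι * treeSum r P M S c
        ≤ Fintype.card ι ^ Sᶜ.card * Fintype.card ι *
            treeBound r q M (S.erase ℓ) (peelExponent P q t ℓ) (peelWeight P M c ℓ) := hIH
      _ ≤ Fintype.card ι ^ Sᶜ.card * Fintype.card ι * treeBound r q M S t c :=
          mul_le_mul_of_nonneg_left (treeBound_peel_le h hq hM hMs hℓ hleaf) (by positivity)
      _ = Fintype.card ι * (Fintype.card ι ^ Sᶜ.card * treeBound r q M S t c) := by ring

theorem sum_prod_le_prod_recipNorm [Nonempty ι] {D : V → ℕ} (hD : ∀ x ≠ r, D (P x) < D x)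
    (hq : ∀ x ≠ r, 0 < q x) (hqsum : ∑ x ∈ univ.erase r, q x = 1)
    (hM : ∀ x i j, 0 ≤ M x i j) (hMs : ∀ x i j, M x i j = M x j i) :
    ∑ v : V → ι, ∏ x ∈ univ.erase r, M x (v x) (v (P x)) ≤
      ∏ x ∈ univ.erase r, recipNorm (q x) fun i => ∑ j, M x i j := by
  have h : Admissible r P q univ 0 (1 : V → ι → ℝ) :=
    { root_mem := mem_univ r
      parent_mem := fun x _ => mem_univ (P x)
      weight_nonneg := fun _ _ => zero_le_one
      exponent_nonneg := fun _ => le_rfl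
      weight_eq_one := fun _ _ => rfl
      exponent_sum := by simp [hqsum] }
  simpa [treeSum, treeBound] using treeSum_le hD hq hM hMs h

end RootedTree

section Graph

variable {V : Type*} {G : SimpleGraph V}

theorem exists_adj_dist_lt (hG : G.Connected) {x r : V} (hx : x ≠ r) :
    ∃ y, G.Adj x y ∧ G.dist y r < G.dist x r := by
  obtain ⟨p, hp⟩ := hG.exists_walk_length_eq_dist x r
  cases p with
  | nil => exact absurd rfl hx
  | cons hadj p =>
    refine ⟨_, hadj, (SimpleGraph.dist_le p).trans_lt ?_⟩
    rw [← hp, SimpleGraph.Walk.length_cons]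
    omega

variable [Fintype V] [DecidableEq V]

theorem injOn_parent_edge {r : V} {P : V → V} {D : V → ℕ} (hD : ∀ x ≠ r, D (P x) < D x) :
    Set.InjOn (fun x => s(x, P x)) (univ.erase r : Finset V) := by
  intro x hx y hy hxy
  rcases Sym2.eq_iff.1 hxy with ⟨hxy, -⟩ | ⟨rfl, hyx⟩
  · exact hxy
  · have := hD _ (ne_of_mem_erase hx)
    have := hD y (ne_of_mem_erase hy)
    rw [hyx] at *
    omega

theorem edgeFinset_eq_image_parent [DecidableRel G.Adj] (hG : G.IsTree) {r : V} {P : V → V}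
    {D : V → ℕ} (hP : ∀ x ≠ r, G.Adj x (P x)) (hD : ∀ x ≠ r, D (P x) < D x) :
    G.edgeFinset = (univ.erase r).image fun x => s(x, P x) := by
  -- an injection from the `card V - 1` non-root vertices into the edges of a tree is onto
  refine (eq_of_subset_of_card_le ?_ ?_).symm
  · intro e he
    obtain ⟨x, hx, rfl⟩ := mem_image.1 he
    exact SimpleGraph.mem_edgeFinset.2 (hP x (ne_of_mem_erase hx))
  · rw [card_image_of_injOn (injOn_parent_edge hD), card_erase_of_mem (mem_univ r), card_univ,
      ← hG.card_edgeFinset, Nat.add_sub_cancel]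

end Graph

end BrascampLiebTree

open BrascampLiebTree

theorem stmt3_general {m n : ℕ} (G : SimpleGraph (Fin m)) [DecidableRel G.Adj]
    (hG : G.IsTree)
    (B : Sym2 (Fin m) → Matrix (Fin n) (Fin n) ℝ)
    (hBnn : ∀ e i j, 0 ≤ B e i j) (hBsym : ∀ e i j, B e i j = B e j i)
    (p : Sym2 (Fin m) → ℝ) (hp : ∀ e ∈ G.edgeFinset, 1 ≤ p e)
    (hpsum : ∑ e ∈ G.edgeFinset, 1 / p e = 1) :
    ∑ v : Fin m → Fin n, ∏ e ∈ G.edgeFinset, edgeVal B hBsym v e ≤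
      ∏ e ∈ G.edgeFinset, (∑ i, (∑ j, B e i j) ^ (p e)) ^ (1 / p e) := by
  obtain ⟨r⟩ := hG.connected.nonempty
  rcases isEmpty_or_nonempty (Fin n) with hn | hn
  · have : IsEmpty (Fin m → Fin n) := ⟨fun v => hn.elim (v r)⟩
    rw [univ_eq_empty, sum_empty]
    exact prod_nonneg fun e _ => rpow_nonneg
      (sum_nonneg fun i _ => rpow_nonneg (sum_nonneg fun j _ => hBnn e i j) _) _
  choose! P hP using fun x (hx : x ≠ r) => exists_adj_dist_lt hG.connected hx
  let D : Fin m → ℕ := fun x => G.dist x r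
  have hD : ∀ x ≠ r, D (P x) < D x := fun x hx => (hP x hx).2
  have hinj := injOn_parent_edge hD
  have hq (x : Fin m) (hx : x ≠ r) : 0 < 1 / p s(x, P x) :=
    one_div_pos.2 (one_pos.trans_le (hp _ (SimpleGraph.mem_edgeFinset.2 (hP x hx).1)))
  rw [edgeFinset_eq_image_parent hG (fun x hx => (hP x hx).1) hD] at hpsum ⊢
  rw [sum_image hinj] at hpsum
  simp only [prod_image hinj]
  calc ∑ v : Fin m → Fin n, ∏ x ∈ univ.erase r, edgeVal B hBsym v s(x, P x)
      = ∑ v : Fin m → Fin n, ∏ x ∈ univ.erase r, B s(x, P x) (v x) (v (P x)) := rfl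
    _ ≤ ∏ x ∈ univ.erase r, recipNorm (1 / p s(x, P x)) fun i => ∑ j, B s(x, P x) i j :=
      sum_prod_le_prod_recipNorm hD hq hpsum (fun x => hBnn _) (fun x => hBsym _)
    _ = ∏ x ∈ univ.erase r, (∑ i, (∑ j, B s(x, P x) i j) ^ p s(x, P x)) ^ (1 / p s(x, P x)) := by
      simp only [recipNorm, one_div, inv_inv]

/-- Brascamp–Lieb type inequality for trees: if `G` is a tree on `[m]`, each edge `e`
carries a nonnegative symmetric matrix `B e` and reals `p_e ≥ 1` with `∑_e 1/p_e = 1`, then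
`∑_{v ∈ [n]^m} ∏_e B^{(e)}_{v(e)} ≤ ∏_e (∑_i (∑_j B^{(e)}_{ij})^{p_e})^{1/p_e}`. -/
theorem stmt3 {m n : ℕ} (hm : 2 ≤ m) (G : SimpleGraph (Fin m)) [DecidableRel G.Adj]
    (hG : G.IsTree)
    (B : Sym2 (Fin m) → Matrix (Fin n) (Fin n) ℝ)
    (hBnn : ∀ e i j, 0 ≤ B e i j) (hBsym : ∀ e i j, B e i j = B e j i)
    (p : Sym2 (Fin m) → ℝ) (hp : ∀ e ∈ G.edgeFinset, 1 ≤ p e)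
    (hpsum : ∑ e ∈ G.edgeFinset, 1 / p e = 1) :
    ∑ v : Fin m → Fin n, ∏ e ∈ G.edgeFinset, edgeVal B hBsym v e ≤
      ∏ e ∈ G.edgeFinset, (∑ i, (∑ j, B e i j) ^ (p e)) ^ (1 / p e) :=
  stmt3_general G hG B hBnn hBsym p hp hpsum
end

section
/- Let G be a connected graph on m vertices and k_e ≥ 2 real weights on its edges with total weight |k| = ∑_e k_e. Let b be a symmetric n×n matrix with nonnegative entries. Then W := ∑_{v ∈ [n]^m} ∏_{e ∈ E(G)} b_{v(e)}^{k_e} satisfies W ≤ (∑_i (∑_j b_{ij}^2)^{|k|/2})^{2(m-1)/|k|} · (∑_i max_j b_{ij}^{|k|})^{1 - 2(m-1)/|k|}. -/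
open Real

/-- The value `b_{v(e)}` of the symmetric matrix `b` at the pair of indices assigned
by `v` to the endpoints of the edge `e`. -/
noncomputable def edgeValS {m n : ℕ} (b : Matrix (Fin n) (Fin n) ℝ)
    (hbsym : ∀ i j, b i j = b j i) (v : Fin m → Fin n) (e : Sym2 (Fin m)) : ℝ :=
  Sym2.lift ⟨fun a c => b (v a) (v c), fun a c => hbsym (v a) (v c)⟩ e

/-!
Order the vertices along a spanning tree `T` of `G`, so that every vertex but the first is
joined to an earlier one. Of the exponent `k_e` of a tree edge, `2` is kept on `b_{v(e)}`; every
other part of an exponent is bounded through `b_{v(e)} ≤ max_j b_{v(a) j}` for an endpoint `a`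
of `e`. The resulting sum over `v` is computed by summing out the leaves of `T` one at a time;
this multiplies the weight at the parent by the image of the leaf's weight under
`g ↦ (∑_j b_{ij}^2 g_j)_i`. The weights are controlled in the `ℓ^p` norms dictated by the
number of factors they have absorbed: this operator maps `ℓ^∞` to `ℓ^(K/2)` and `ℓ^(K/(K-2))`
to `ℓ^1` with norm `‖(∑_j b_{ij}^2)_i‖_(K/2)`, and Hölder's inequality interpolates between
these two bounds.
-/

open Finset

namespace TreeHolder

section PNorm

variable {ι : Type*} [Fintype ι]

noncomputable def pNorm (p : ℝ) (f : ι → ℝ) : ℝ := (∑ i, f i ^ p) ^ (1 / p)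

lemma pNorm_nonneg (p : ℝ) {f : ι → ℝ} (hf : ∀ i, 0 ≤ f i) : 0 ≤ pNorm p f :=
  rpow_nonneg (sum_nonneg fun i _ => rpow_nonneg (hf i) p) _

lemma pNorm_one (f : ι → ℝ) : pNorm 1 f = ∑ i, f i := by
  simp [pNorm]

lemma pNorm_mono {p : ℝ} (hp : 0 < p) {f g : ι → ℝ} (hf : ∀ i, 0 ≤ f i)
    (hfg : ∀ i, f i ≤ g i) : pNorm p f ≤ pNorm p g :=
  rpow_le_rpow (sum_nonneg fun i _ => rpow_nonneg (hf i) p)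
    (sum_le_sum fun i _ => rpow_le_rpow (hf i) (hfg i) hp.le) (by positivity)

lemma pNorm_rpow {f : ι → ℝ} (hf : ∀ i, 0 ≤ f i) (p : ℝ) {t : ℝ} (ht : t ≠ 0) :
    pNorm p (fun i => f i ^ t) = pNorm (t * p) f ^ t := by
  simp only [pNorm, ← rpow_mul (hf _)]
  rw [← rpow_mul (sum_nonneg fun i _ => rpow_nonneg (hf i) _), one_div_mul_eq_div,
    div_mul_cancel_left₀ ht, one_div]

lemma pNorm_mul_le {p q r : ℝ} (hpqr : p.HolderTriple q r) {f g : ι → ℝ}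
    (hf : ∀ i, 0 ≤ f i) (hg : ∀ i, 0 ≤ g i) :
    pNorm r (fun i => f i * g i) ≤ pNorm p f * pNorm q g := by
  lift f to ι → NNReal using hf
  lift g to ι → NNReal using hg
  simp only [pNorm]
  exact_mod_cast NNReal.Lr_le_Lp_mul_Lq univ f g hpqr

end PNorm

section RowNorms

variable {ι : Type*} (b : Matrix ι ι ℝ)

noncomputable def rowMax (i : ι) : ℝ := ⨆ j, b i j

lemma rowMax_nonneg {b : Matrix ι ι ℝ} (hb : ∀ i j, 0 ≤ b i j) (i : ι) : 0 ≤ rowMax b i :=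
  Real.iSup_nonneg fun j => hb i j

lemma le_rowMax [Finite ι] (i j : ι) : b i j ≤ rowMax b i :=
  le_ciSup (Set.finite_range _).bddAbove j

variable [Fintype ι]

def rowSqSum (i : ι) : ℝ := ∑ j, b i j ^ 2

def sqMulVec (g : ι → ℝ) (i : ι) : ℝ := ∑ j, b i j ^ 2 * g j

variable {b}

lemma rowSqSum_nonneg (i : ι) : 0 ≤ rowSqSum b i :=
  sum_nonneg fun _ _ => sq_nonneg _

lemma sqMulVec_nonneg {g : ι → ℝ} (hg : ∀ i, 0 ≤ g i) (i : ι) : 0 ≤ sqMulVec b g i :=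
  sum_nonneg fun j _ => mul_nonneg (sq_nonneg _) (hg j)

lemma sqMulVec_le_rowSqSum {g : ι → ℝ} (hg : ∀ i, g i ≤ 1) (i : ι) :
    sqMulVec b g i ≤ rowSqSum b i :=
  sum_le_sum fun j _ => mul_le_of_le_one_right (sq_nonneg _) (hg j)

lemma sum_sqMulVec (hsym : ∀ i j, b i j = b j i) (g : ι → ℝ) :
    ∑ i, sqMulVec b g i = ∑ j, rowSqSum b j * g j := by
  simp only [sqMulVec, rowSqSum, sum_mul]
  rw [sum_comm]
  simp only [hsym]

lemma sum_sqMulVec_le (hsym : ∀ i j, b i j = b j i) {K : ℝ} (hK : 2 < K) {g : ι → ℝ}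
    (hg : ∀ i, 0 ≤ g i) :
    ∑ i, sqMulVec b g i ≤ pNorm (K / 2) (rowSqSum b) * pNorm (K / (K - 2)) g := by
  have hconj : (K / 2).HolderConjugate (K / (K - 2)) :=
    Real.holderConjugate_iff.mpr ⟨by linarith, by field_simp; ring⟩
  rw [sum_sqMulVec hsym, ← pNorm_one]
  exact pNorm_mul_le hconj rowSqSum_nonneg hg

lemma sqMulVec_le_interpolate {g : ι → ℝ} (hg : ∀ i, 0 ≤ g i) {τ : ℝ} (hτ : 0 < τ)
    (hτ1 : τ ≤ 1) (i : ι) :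
    sqMulVec b g i ≤ rowSqSum b i ^ (1 - τ) * sqMulVec b (fun j => g j ^ τ⁻¹) i ^ τ := by
  have := inner_le_weight_mul_Lp_of_nonneg univ (one_le_inv₀ hτ |>.mpr hτ1)
    (fun j => b i j ^ 2) g (fun j => sq_nonneg _) hg
  rwa [inv_inv] at this

lemma pNorm_sqMulVec_le_of_lt (hsym : ∀ i j, b i j = b j i) {K δ : ℝ} (hδ : 0 < δ)
    (hK : δ + 2 < K) {g : ι → ℝ} (hg : ∀ i, 0 ≤ g i) :
    pNorm (K / (δ + 2)) (sqMulVec b g) ≤ pNorm (K / 2) (rowSqSum b) * pNorm (K / δ) g := by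
  have hK0 : 0 < K := by linarith
  have hK2 : 0 < K - 2 := by linarith
  set A := pNorm (K / 2) (rowSqSum b)
  have hA : 0 ≤ A := pNorm_nonneg _ rowSqSum_nonneg
  set τ := δ / (K - 2) with hτ
  have hτ0 : 0 < τ := div_pos hδ (by linarith)
  have hτ1 : τ < 1 := (div_lt_one hK2).mpr (by linarith)
  have hτ1' : 0 < 1 - τ := by linarith
  set g' := fun j => g j ^ τ⁻¹
  have hg' : ∀ j, 0 ≤ g' j := fun j => rpow_nonneg (hg j) _
  have hTriple : (K / (2 * (1 - τ))).HolderTriple τ⁻¹ (K / (δ + 2)) := by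
    refine ⟨?_, by positivity, by positivity⟩
    rw [hτ]
    field_simp
    ring
  calc pNorm (K / (δ + 2)) (sqMulVec b g)
      ≤ pNorm (K / (δ + 2)) (fun i => rowSqSum b i ^ (1 - τ) * sqMulVec b g' i ^ τ) :=
        pNorm_mono (by positivity) (sqMulVec_nonneg hg)
          (sqMulVec_le_interpolate hg hτ0 hτ1.le)
    _ ≤ pNorm (K / (2 * (1 - τ))) (fun i => rowSqSum b i ^ (1 - τ)) *
          pNorm τ⁻¹ (fun i => sqMulVec b g' i ^ τ) :=
        pNorm_mul_le hTriple (fun i => rpow_nonneg (rowSqSum_nonneg i) _)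
          (fun i => rpow_nonneg (sqMulVec_nonneg hg' i) _)
    _ = A ^ (1 - τ) * (∑ i, sqMulVec b g' i) ^ τ := by
        rw [pNorm_rpow rowSqSum_nonneg _ (by linarith), pNorm_rpow (sqMulVec_nonneg hg') _
          hτ0.ne', mul_inv_cancel₀ hτ0.ne', pNorm_one]
        congr 3
        field_simp
    _ ≤ A ^ (1 - τ) * (A * pNorm (K / (K - 2)) g') ^ τ :=
        mul_le_mul_of_nonneg_left (rpow_le_rpow (sum_nonneg fun i _ => sqMulVec_nonneg hg' i)
          (sum_sqMulVec_le hsym (by linarith) hg') hτ0.le) (rpow_nonneg hA _)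
    _ = A * pNorm (K / δ) g := by
        have hexp : τ⁻¹ * (K / (K - 2)) = K / δ := by
          rw [hτ]
          field_simp
        rw [pNorm_rpow hg _ (inv_ne_zero hτ0.ne'), hexp,
          mul_rpow hA (rpow_nonneg (pNorm_nonneg _ hg) _), ← rpow_mul (pNorm_nonneg _ hg),
          inv_mul_cancel₀ hτ0.ne', rpow_one, ← mul_assoc,
          ← rpow_add_of_nonneg hA hτ1'.le hτ0.le, sub_add_cancel, rpow_one]

lemma pNorm_sqMulVec_le (hsym : ∀ i j, b i j = b j i) {K δ : ℝ} (hδ : 0 < δ) (hδK : δ + 2 ≤ K)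
    {g : ι → ℝ} (hg : ∀ i, 0 ≤ g i) :
    pNorm (K / (δ + 2)) (sqMulVec b g) ≤ pNorm (K / 2) (rowSqSum b) * pNorm (K / δ) g := by
  rcases hδK.eq_or_lt with rfl | hK
  · have := sum_sqMulVec_le hsym (K := δ + 2) (by linarith) hg
    rw [div_self (by positivity), pNorm_one]
    rwa [add_sub_cancel_right] at this
  · exact pNorm_sqMulVec_le_of_lt hsym hδ hK hg

end RowNorms

section Degree

variable {ι : Type*} [Fintype ι] (b : Matrix ι ι ℝ)

/-- `g` behaves like a product of `d` factors `rowSqSum b` (each in `ℓ^(K/2)`) and of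
`rowMax b ^ w` (in `ℓ^(K/w)`), hence lies in `ℓ^(K/(2d+w))`, with `g ≤ 1` standing for `ℓ^∞`. -/
structure HasDegree (K d w : ℝ) (g : ι → ℝ) : Prop where
  d_nonneg : 0 ≤ d
  w_nonneg : 0 ≤ w
  nonneg : ∀ i, 0 ≤ g i
  le_one : 2 * d + w = 0 → ∀ i, g i ≤ 1
  pNorm_le : 0 < 2 * d + w →
    pNorm (K / (2 * d + w)) g ≤ pNorm (K / 2) (rowSqSum b) ^ d * pNorm K (rowMax b) ^ w

variable {b}

lemma HasDegree.one (K : ℝ) : HasDegree b K 0 0 1 :=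
  ⟨le_rfl, le_rfl, fun _ => zero_le_one, fun _ _ => le_rfl, by norm_num⟩

lemma hasDegree_rowMax_rpow (hb : ∀ i j, 0 ≤ b i j) (K : ℝ) {w : ℝ} (hw : 0 ≤ w) :
    HasDegree b K 0 w (fun i => rowMax b i ^ w) := by
  refine ⟨le_rfl, hw, fun i => rpow_nonneg (rowMax_nonneg hb i) _, fun h i => ?_, fun h => ?_⟩
  · simp [show w = 0 by linarith]
  · have hw0 : w ≠ 0 := by linarith
    rw [mul_zero, zero_add, pNorm_rpow (rowMax_nonneg hb) _ hw0, mul_div_cancel₀ K hw0,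
      rpow_zero, one_mul]

lemma HasDegree.eq_zero {K d w : ℝ} {g : ι → ℝ} (h : HasDegree b K d w g)
    (hδ : 2 * d + w = 0) : d = 0 ∧ w = 0 := by
  have := h.d_nonneg
  have := h.w_nonneg
  constructor <;> linarith

lemma HasDegree.mul (hb : ∀ i j, 0 ≤ b i j) {K : ℝ} (hK : 0 < K) {d₁ w₁ d₂ w₂ : ℝ} {g₁ g₂ : ι → ℝ}
    (h₁ : HasDegree b K d₁ w₁ g₁) (h₂ : HasDegree b K d₂ w₂ g₂) :
    HasDegree b K (d₁ + d₂) (w₁ + w₂) (fun i => g₁ i * g₂ i) := by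
  have hd₁ := h₁.d_nonneg
  have hw₁ := h₁.w_nonneg
  have hd₂ := h₂.d_nonneg
  have hw₂ := h₂.w_nonneg
  refine ⟨by positivity, by positivity, fun i => mul_nonneg (h₁.nonneg i) (h₂.nonneg i),
    fun h i => ?_, fun h => ?_⟩
  · exact mul_le_one₀ (h₁.le_one (by linarith) i) (h₂.nonneg i) (h₂.le_one (by linarith) i)
  set A := pNorm (K / 2) (rowSqSum b)
  set B := pNorm K (rowMax b)
  have hA : 0 ≤ A := pNorm_nonneg _ rowSqSum_nonneg
  have hB : 0 ≤ B := pNorm_nonneg _ (rowMax_nonneg hb)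
  suffices pNorm (K / (2 * (d₁ + d₂) + (w₁ + w₂))) (fun i => g₁ i * g₂ i) ≤
      A ^ d₁ * B ^ w₁ * (A ^ d₂ * B ^ w₂) by
    rwa [rpow_add_of_nonneg hA hd₁ hd₂, rpow_add_of_nonneg hB hw₁ hw₂, mul_mul_mul_comm]
  rcases (show 0 ≤ 2 * d₁ + w₁ by linarith).eq_or_lt with hδ₁ | hδ₁
  · obtain ⟨rfl, rfl⟩ := h₁.eq_zero hδ₁.symm
    simp only [rpow_zero, mul_one, one_mul, zero_add] at h ⊢
    exact (pNorm_mono (by positivity) (fun i => mul_nonneg (h₁.nonneg i) (h₂.nonneg i))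
      fun i => mul_le_of_le_one_left (h₂.nonneg i) (h₁.le_one hδ₁.symm i)).trans (h₂.pNorm_le h)
  rcases (show 0 ≤ 2 * d₂ + w₂ by linarith).eq_or_lt with hδ₂ | hδ₂
  · obtain ⟨rfl, rfl⟩ := h₂.eq_zero hδ₂.symm
    simp only [rpow_zero, mul_one, add_zero] at h ⊢
    exact (pNorm_mono (by positivity) (fun i => mul_nonneg (h₁.nonneg i) (h₂.nonneg i))
      fun i => mul_le_of_le_one_right (h₁.nonneg i) (h₂.le_one hδ₂.symm i)).trans (h₁.pNorm_le h)
  have hTriple : (K / (2 * d₁ + w₁)).HolderTriple (K / (2 * d₂ + w₂))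
      (K / (2 * (d₁ + d₂) + (w₁ + w₂))) :=
    ⟨by field_simp; ring, by positivity, by positivity⟩
  exact (pNorm_mul_le hTriple h₁.nonneg h₂.nonneg).trans <|
    mul_le_mul (h₁.pNorm_le hδ₁) (h₂.pNorm_le hδ₂) (pNorm_nonneg _ h₂.nonneg) (by positivity)

lemma HasDegree.sqMulVec (hsym : ∀ i j, b i j = b j i) {K d w : ℝ} {g : ι → ℝ}
    (h : HasDegree b K d w g) (hK : 2 * (d + 1) + w ≤ K) :
    HasDegree b K (d + 1) w (sqMulVec b g) := by
  have hd := h.d_nonneg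
  have hw := h.w_nonneg
  refine ⟨by linarith, hw, sqMulVec_nonneg h.nonneg, fun h' => absurd h' (by linarith),
    fun _ => ?_⟩
  set A := pNorm (K / 2) (rowSqSum b)
  have hA : 0 ≤ A := pNorm_nonneg _ rowSqSum_nonneg
  rw [rpow_add_of_nonneg hA hd zero_le_one, rpow_one, mul_comm (A ^ d) A, mul_assoc]
  rcases (show 0 ≤ 2 * d + w by linarith).eq_or_lt with hδ | hδ
  · obtain ⟨rfl, rfl⟩ := h.eq_zero hδ.symm
    rw [rpow_zero, rpow_zero, mul_one, mul_one]
    norm_num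
    exact pNorm_mono (by linarith) (sqMulVec_nonneg h.nonneg)
      (sqMulVec_le_rowSqSum (h.le_one hδ.symm))
  · rw [show 2 * (d + 1) + w = (2 * d + w) + 2 by ring]
    exact (pNorm_sqMulVec_le hsym hδ (by linarith) h.nonneg).trans
      (mul_le_mul_of_nonneg_left (h.pNorm_le hδ) hA)

lemma hasDegree_mul_ite_sqMulVec (hb : ∀ i j, 0 ≤ b i j) (hsym : ∀ i j, b i j = b j i) {K : ℝ}
    (hK : 0 < K) {d w d' w' : ℝ} {g g' : ι → ℝ} (h : HasDegree b K d w g)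
    (h' : HasDegree b K d' w' g') (hK' : 2 * (d' + 1) + w' ≤ K) (c : Prop) [Decidable c] :
    HasDegree b K (d + if c then d' + 1 else 0) (w + if c then w' else 0)
      (fun i => g i * if c then sqMulVec b g' i else 1) := by
  split_ifs
  · exact h.mul hb hK (h'.sqMulVec hsym hK')
  · exact h.mul hb hK (HasDegree.one K)

end Degree

section TreeSum

variable {ι : Type*} (b : Matrix ι ι ℝ)

/-- `p i ≤ i` is the parent of vertex `i + 1` in a tree on `Fin (M + 1)`. -/
def treeEdgeProd {M : ℕ} (p : Fin M → Fin (M + 1)) (v : Fin (M + 1) → ι) : ℝ :=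
  ∏ i, b (v (p i)) (v i.succ) ^ 2

def initParent {N : ℕ} (p : Fin (N + 1) → Fin (N + 2)) (hp : ∀ i, (p i : ℕ) ≤ i) (i : Fin N) :
    Fin (N + 1) :=
  (p i.castSucc).castLT (by have := hp i.castSucc; simp at this; omega)

def lastParent {N : ℕ} (p : Fin (N + 1) → Fin (N + 2)) (hp : ∀ i, (p i : ℕ) ≤ i) :
    Fin (N + 1) :=
  (p (Fin.last N)).castLT (by have := hp (Fin.last N); simp at this; omega)

lemma treeEdgeProd_snoc {N : ℕ} (p : Fin (N + 1) → Fin (N + 2)) (hp : ∀ i, (p i : ℕ) ≤ i)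
    (v : Fin (N + 1) → ι) (x : ι) :
    treeEdgeProd b p (Fin.snoc v x) =
      treeEdgeProd b (initParent p hp) v * b (v (lastParent p hp)) x ^ 2 := by
  have hinit (i : Fin N) : p i.castSucc = (initParent p hp i).castSucc := by
    simp [initParent]
  have hlast : p (Fin.last N) = (lastParent p hp).castSucc := by
    simp [lastParent]
  simp only [treeEdgeProd, Fin.prod_univ_castSucc, hinit, hlast, Fin.succ_castSucc,
    Fin.succ_last, Fin.snoc_castSucc, Fin.snoc_last]

variable [Fintype ι]

lemma sum_treeEdgeProd_mul_prod_snoc {N : ℕ} (p : Fin (N + 1) → Fin (N + 2))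
    (hp : ∀ i, (p i : ℕ) ≤ i) (g : Fin (N + 2) → ι → ℝ) :
    ∑ v, treeEdgeProd b p v * ∏ t, g t (v t) =
      ∑ v, treeEdgeProd b (initParent p hp) v * ∏ t, g t.castSucc (v t) *
        if t = lastParent p hp then sqMulVec b (g (Fin.last _)) (v t) else 1 := by
  rw [← (Fin.snocEquiv fun _ => ι).sum_comp, Fintype.sum_prod_type_right]
  refine sum_congr rfl fun v _ => ?_
  have hsnoc (x : ι) : treeEdgeProd b p (Fin.snoc v x) *
      ∏ t, g t ((Fin.snoc v x : Fin (N + 2) → ι) t) =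
      (treeEdgeProd b (initParent p hp) v * ∏ t, g t.castSucc (v t)) *
        (b (v (lastParent p hp)) x ^ 2 * g (Fin.last _) x) := by
    rw [treeEdgeProd_snoc b p hp, Fin.prod_univ_castSucc]
    simp only [Fin.snoc_castSucc, Fin.snoc_last]
    ring
  have happ (x : ι) : (Fin.snocEquiv fun _ => ι) (x, v) = Fin.snoc v x := rfl
  simp only [happ, hsnoc]
  rw [← mul_sum, prod_mul_distrib, prod_ite_eq', if_pos (mem_univ _), mul_assoc]
  rfl

theorem sum_treeEdgeProd_mul_prod_le (hb : ∀ i j, 0 ≤ b i j) (hsym : ∀ i j, b i j = b j i)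
    {K : ℝ} (hK : 0 < K) {M : ℕ} (p : Fin M → Fin (M + 1)) (hp : ∀ i, (p i : ℕ) ≤ i)
    (g : Fin (M + 1) → ι → ℝ) (d w : Fin (M + 1) → ℝ)
    (hg : ∀ t, HasDegree b K (d t) (w t) (g t)) (hdw : 2 * (M + ∑ t, d t) + ∑ t, w t = K) :
    ∑ v, treeEdgeProd b p v * ∏ t, g t (v t) ≤
      pNorm (K / 2) (rowSqSum b) ^ (M + ∑ t, d t) * pNorm K (rowMax b) ^ (∑ t, w t) := by
  induction M with
  | zero =>
    simp only [Fin.sum_univ_succ, Fin.sum_univ_zero, add_zero, Nat.cast_zero, zero_add] at hdw ⊢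
    have hδ : 0 < 2 * d 0 + w 0 := by linarith
    calc ∑ v : Fin 1 → ι, treeEdgeProd b p v * ∏ t, g t (v t)
        = pNorm (K / (2 * d 0 + w 0)) (g 0) := by
          rw [hdw, div_self hK.ne', pNorm_one]
          exact Fintype.sum_equiv (Equiv.funUnique (Fin 1) ι) _ _ fun v => by
            simp [treeEdgeProd]
      _ ≤ _ := (hg 0).pNorm_le hδ
  | succ N ih =>
    set L := Fin.last (N + 1)
    set pl := lastParent p hp
    have hdL : d L ≤ ∑ t, d t := single_le_sum (fun t _ => (hg t).d_nonneg) (mem_univ L)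
    have hwL : w L ≤ ∑ t, w t := single_le_sum (fun t _ => (hg t).w_nonneg) (mem_univ L)
    have hsum_d : ∑ t, d t = ∑ t : Fin (N + 1), d t.castSucc + d L := Fin.sum_univ_castSucc d
    have hsum_w : ∑ t, w t = ∑ t : Fin (N + 1), w t.castSucc + w L := Fin.sum_univ_castSucc w
    rw [sum_treeEdgeProd_mul_prod_snoc b p hp]
    refine (ih (initParent p hp) (fun i => ?_)
      (fun t y => g t.castSucc y * if t = pl then sqMulVec b (g L) y else 1)
      (fun t => d t.castSucc + if t = pl then d L + 1 else 0)
      (fun t => w t.castSucc + if t = pl then w L else 0) (fun t => ?_) ?_).trans_eq ?_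
    · have := hp i.castSucc
      simpa [initParent] using this
    · refine hasDegree_mul_ite_sqMulVec hb hsym hK (hg _) (hg L) ?_ _
      push_cast at hdw
      linarith
    · simp only [sum_add_distrib, sum_ite_eq', mem_univ, if_true]
      push_cast at hdw
      linarith
    · simp only [sum_add_distrib, sum_ite_eq', mem_univ, if_true, hsum_d, hsum_w]
      push_cast
      ring_nf

end TreeSum

section TreeOrder

variable {V : Type*} {G : SimpleGraph V}

lemma injective_treeEdge {M : ℕ} {σ : Fin (M + 1) → V} (hσ : Function.Injective σ)
    {p : Fin M → Fin (M + 1)} (hp : ∀ i, (p i : ℕ) ≤ i) :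
    Function.Injective fun i => s(σ (p i), σ i.succ) := by
  intro i j hij
  rcases Sym2.eq_iff.mp hij with ⟨-, h⟩ | ⟨h₁, h₂⟩
  · exact Fin.succ_injective _ (hσ h)
  · have := hp i
    have := hp j
    rw [hσ h₁] at *
    rw [← hσ h₂] at *
    simp only [Fin.val_succ] at *
    omega

variable [Fintype V]

lemma exists_injective_treeOrder (hG : G.Preconnected) {j : ℕ} (hj : j < Fintype.card V) :
    ∃ (f : Fin (j + 1) → V) (p : Fin j → Fin (j + 1)), Function.Injective f ∧
      (∀ i, (p i : ℕ) ≤ i) ∧ ∀ i, G.Adj (f (p i)) (f i.succ) := by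
  induction j with
  | zero =>
    obtain ⟨x⟩ := Fintype.card_pos_iff.mp hj
    exact ⟨fun _ => x, Fin.elim0, fun a c _ => Fin.ext (by omega), fun i => i.elim0,
      fun i => i.elim0⟩
  | succ j ih =>
    obtain ⟨f, p, hf, hp, hadj⟩ := ih (by omega)
    obtain ⟨y, hy⟩ : ∃ y, y ∉ Set.range f := by
      by_contra! h
      have := Fintype.card_le_of_surjective f h
      simp only [Fintype.card_fin] at this
      omega
    obtain ⟨walk⟩ := hG (f 0) y
    obtain ⟨dart, -, ⟨i₀, hi₀⟩, hnew⟩ := walk.exists_boundary_dart (Set.range f) ⟨0, rfl⟩ hy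
    refine ⟨Fin.snoc f dart.snd, Fin.snoc (fun i => (p i).castSucc) i₀.castSucc,
      Fin.snoc_injective_of_injective hf hnew, fun i => ?_, fun i => ?_⟩
    · induction i using Fin.lastCases with
      | last => simp [i₀.is_le]
      | cast i => simpa using hp i
    · induction i using Fin.lastCases with
      | last => simp [hi₀, dart.adj]
      | cast i =>
        simpa only [Fin.lastCases_castSucc, Fin.snoc_castSucc, Fin.succ_castSucc] using hadj i

lemma exists_treeOrder (hG : G.Preconnected) {m : ℕ} (hm : Fintype.card V = m + 1) :
    ∃ (σ : Fin (m + 1) ≃ V) (p : Fin m → Fin (m + 1)),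
      (∀ i, (p i : ℕ) ≤ i) ∧ ∀ i, G.Adj (σ (p i)) (σ i.succ) := by
  obtain ⟨f, p, hf, hp, hadj⟩ := exists_injective_treeOrder hG (j := m) (by omega)
  have hbij : Function.Bijective f :=
    (Fintype.bijective_iff_injective_and_card f).mpr ⟨hf, by simp [hm]⟩
  exact ⟨Equiv.ofBijective f hbij, p, hp, hadj⟩

end TreeOrder

section EdgeProduct

variable {m n : ℕ} {b : Matrix (Fin n) (Fin n) ℝ} (hsym : ∀ i j, b i j = b j i)

lemma edgeValS_nonneg (hb : ∀ i j, 0 ≤ b i j) (v : Fin m → Fin n) (e : Sym2 (Fin m)) :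
    0 ≤ edgeValS b hsym v e := by
  induction e using Sym2.ind with
  | _ a c => exact hb _ _

lemma edgeValS_le_rowMax (v : Fin m → Fin n) {e : Sym2 (Fin m)} {x : Fin m} (hx : x ∈ e) :
    edgeValS b hsym v e ≤ rowMax b (v x) := by
  induction e using Sym2.ind with
  | _ a c =>
    rcases Sym2.mem_iff.mp hx with rfl | rfl
    · exact le_rowMax b _ _
    · exact (hsym _ _).trans_le (le_rowMax b _ _)

/-- The exponent of an edge `e ∈ E` beyond the `2` spent on it when `e ∈ T` is charged to the
endpoint `e.out.1`. -/
noncomputable def excessWeight (E T : Finset (Sym2 (Fin m))) (k : Sym2 (Fin m) → ℝ)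
    (t : Fin m) : ℝ :=
  ∑ e ∈ E with e.out.1 = t, (k e - if e ∈ T then 2 else 0)

lemma excessWeight_nonneg {E T : Finset (Sym2 (Fin m))} {k : Sym2 (Fin m) → ℝ}
    (hk : ∀ e ∈ E, 2 ≤ k e) (t : Fin m) : 0 ≤ excessWeight E T k t :=
  sum_nonneg fun e he => by
    have := hk e (mem_filter.mp he).1
    split_ifs <;> linarith

lemma sum_excessWeight {E T : Finset (Sym2 (Fin m))} (hT : T ⊆ E) (k : Sym2 (Fin m) → ℝ) :
    ∑ t, excessWeight E T k t = ∑ e ∈ E, k e - 2 * #T := by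
  simp only [excessWeight]
  rw [sum_fiberwise_of_maps_to (fun e _ => mem_univ _), sum_sub_distrib, sum_ite_mem,
    inter_eq_right.mpr hT, sum_const, nsmul_eq_mul, mul_comm]

lemma prod_edgeValS_rpow_le (hb : ∀ i j, 0 ≤ b i j) {E T : Finset (Sym2 (Fin m))}
    (hT : T ⊆ E) {k : Sym2 (Fin m) → ℝ} (hk : ∀ e ∈ E, 2 ≤ k e) (v : Fin m → Fin n) :
    ∏ e ∈ E, edgeValS b hsym v e ^ k e ≤
      (∏ e ∈ T, edgeValS b hsym v e ^ 2) * ∏ t, rowMax b (v t) ^ excessWeight E T k t := by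
  set ev := edgeValS b hsym v
  have hev := edgeValS_nonneg hsym hb v
  have hfib : ∏ e ∈ E, rowMax b (v e.out.1) ^ (k e - if e ∈ T then 2 else 0) =
      ∏ t, rowMax b (v t) ^ excessWeight E T k t := by
    rw [← prod_fiberwise_of_maps_to (t := univ) (g := fun e : Sym2 (Fin m) => e.out.1)
      (fun e _ => mem_univ _)]
    refine prod_congr rfl fun t _ => ?_
    rw [excessWeight, rpow_sum_of_nonneg (rowMax_nonneg hb _) fun e he => ?_]
    · exact prod_congr rfl fun e he => by rw [(mem_filter.mp he).2]
    · have := hk e (mem_filter.mp he).1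
      split_ifs <;> linarith
  have htree : ∏ e ∈ T, ev e ^ 2 = ∏ e ∈ E, if e ∈ T then ev e ^ 2 else 1 := by
    rw [prod_ite_mem, inter_eq_right.mpr hT]
  rw [← hfib, htree, ← prod_mul_distrib]
  refine prod_le_prod (fun e _ => rpow_nonneg (hev e) _) fun e he => ?_
  have hle := edgeValS_le_rowMax hsym v (Sym2.out_fst_mem e)
  have hke := hk e he
  split_ifs
  · calc ev e ^ k e = ev e ^ (2 : ℝ) * ev e ^ (k e - 2) := by
          rw [← rpow_add_of_nonneg (hev e) zero_le_two (by linarith), add_sub_cancel]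
      _ ≤ ev e ^ 2 * rowMax b (v e.out.1) ^ (k e - 2) := by
          rw [rpow_two]
          gcongr
          exact hev e
  · rw [one_mul, sub_zero]
    exact rpow_le_rpow (hev e) hle (by linarith)

end EdgeProduct

lemma iSup_rpow {α : Type*} [Finite α] [Nonempty α] {f : α → ℝ} (hf : ∀ a, 0 ≤ f a) {K : ℝ}
    (hK : 0 ≤ K) : (⨆ a, f a) ^ K = ⨆ a, f a ^ K := by
  obtain ⟨a₀, ha₀⟩ := Finite.exists_max f
  have hbdd {g : α → ℝ} : BddAbove (Set.range g) := (Set.finite_range g).bddAbove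
  rw [le_antisymm (ciSup_le ha₀) (le_ciSup hbdd a₀),
    le_antisymm (ciSup_le fun a => rpow_le_rpow (hf a) (ha₀ a) hK)
      (le_ciSup (f := fun a => f a ^ K) hbdd a₀)]

lemma pNorm_rowSqSum_rpow {ι : Type*} [Fintype ι] (b : Matrix ι ι ℝ) (K x : ℝ) :
    pNorm (K / 2) (rowSqSum b) ^ x = (∑ i, (∑ j, b i j ^ 2) ^ (K / 2)) ^ (2 * x / K) := by
  rw [pNorm, ← rpow_mul (sum_nonneg fun i _ => rpow_nonneg (rowSqSum_nonneg i) _), one_div_div,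
    div_mul_eq_mul_div]
  rfl

lemma pNorm_rowMax_rpow {ι : Type*} [Fintype ι] {b : Matrix ι ι ℝ} (hb : ∀ i j, 0 ≤ b i j)
    {K : ℝ} (hK : 0 ≤ K) (x : ℝ) :
    pNorm K (rowMax b) ^ x = (∑ i, ⨆ j, b i j ^ K) ^ (x / K) := by
  rw [pNorm, ← rpow_mul (sum_nonneg fun i _ => rpow_nonneg (rowMax_nonneg hb i) _),
    one_div_mul_eq_div]
  congr 1
  refine sum_congr rfl fun i _ => ?_
  have : Nonempty ι := ⟨i⟩
  exact iSup_rpow (hb i) hK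

theorem sum_prod_edgeValS_rpow_le {M n : ℕ} (hM : 0 < M) (G : SimpleGraph (Fin (M + 1)))
    [DecidableRel G.Adj] (hG : G.Preconnected) (k : Sym2 (Fin (M + 1)) → ℝ)
    (hk : ∀ e ∈ G.edgeFinset, 2 ≤ k e) {K : ℝ} (hK : K = ∑ e ∈ G.edgeFinset, k e)
    (b : Matrix (Fin n) (Fin n) ℝ) (hb : ∀ i j, 0 ≤ b i j) (hsym : ∀ i j, b i j = b j i) :
    ∑ v, ∏ e ∈ G.edgeFinset, edgeValS b hsym v e ^ k e ≤
      (∑ i, (∑ j, b i j ^ 2) ^ (K / 2)) ^ (2 * (M : ℝ) / K) *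
        (∑ i, ⨆ j, b i j ^ K) ^ (1 - 2 * (M : ℝ) / K) := by
  obtain ⟨σ, p, hp, hadj⟩ := exists_treeOrder hG (Fintype.card_fin _)
  set T := univ.image fun i => s(σ (p i), σ i.succ)
  have hτ := injective_treeEdge σ.injective hp
  have hT : T ⊆ G.edgeFinset := by
    intro e he
    obtain ⟨i, -, rfl⟩ := mem_image.mp he
    simpa using hadj i
  set w := excessWeight G.edgeFinset T k
  have hw : ∑ t, w (σ t) = K - 2 * M := by
    rw [σ.sum_comp, sum_excessWeight hT, card_image_of_injective _ hτ, card_univ,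
      Fintype.card_fin, hK]
  have hK0 : 0 < K := by
    have := sum_nonneg fun t (_ : t ∈ univ) => excessWeight_nonneg (T := T) hk (σ t)
    have : (1 : ℝ) ≤ M := by exact_mod_cast hM
    linarith
  calc ∑ v, ∏ e ∈ G.edgeFinset, edgeValS b hsym v e ^ k e
      ≤ ∑ v, (∏ e ∈ T, edgeValS b hsym v e ^ 2) * ∏ t, rowMax b (v t) ^ w t :=
        sum_le_sum fun v _ => prod_edgeValS_rpow_le hsym hb hT hk v
    _ = ∑ u, treeEdgeProd b p u * ∏ t, rowMax b (u t) ^ w (σ t) := by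
        refine Fintype.sum_equiv (σ.symm.arrowCongr (Equiv.refl _)) _ _ fun v => ?_
        rw [prod_image hτ.injOn, ← σ.prod_comp]
        rfl
    _ ≤ pNorm (K / 2) (rowSqSum b) ^ ((M : ℝ) + ∑ t, (0 : Fin (M + 1) → ℝ) t) *
          pNorm K (rowMax b) ^ ∑ t, w (σ t) :=
        sum_treeEdgeProd_mul_prod_le b hb hsym hK0 p hp (fun t y => rowMax b y ^ w (σ t)) 0
          (fun t => w (σ t)) (fun t => hasDegree_rowMax_rpow hb K (excessWeight_nonneg hk _))
          (by simp only [Pi.zero_apply, sum_const_zero, add_zero, hw]; ring)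
    _ = _ := by
        rw [pNorm_rowSqSum_rpow, pNorm_rowMax_rpow hb hK0.le, hw, sub_div, div_self hK0.ne']
        simp only [Pi.zero_apply, sum_const_zero, add_zero]

end TreeHolder

open TreeHolder

/-- Hölder-type bound: for a connected graph `G` on `m` vertices with edge weights
`k_e ≥ 2` of total weight `K = ∑_e k_e` and a nonnegative symmetric matrix `b`,
`∑_{v ∈ [n]^m} ∏_e b_{v(e)}^{k_e}
  ≤ (∑_i (∑_j b_{ij}^2)^{K/2})^{2(m-1)/K} (∑_i max_j b_{ij}^K)^{1-2(m-1)/K}`. -/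
theorem stmt4 {m n : ℕ} (G : SimpleGraph (Fin m)) [DecidableRel G.Adj]
    (hG : G.Connected)
    (k : Sym2 (Fin m) → ℝ) (hk : ∀ e ∈ G.edgeFinset, 2 ≤ k e)
    (K : ℝ) (hK : K = ∑ e ∈ G.edgeFinset, k e)
    (b : Matrix (Fin n) (Fin n) ℝ)
    (hbnn : ∀ i j, 0 ≤ b i j) (hbsym : ∀ i j, b i j = b j i) :
    ∑ v : Fin m → Fin n, ∏ e ∈ G.edgeFinset, (edgeValS b hbsym v e) ^ (k e) ≤
      (∑ i, (∑ j, b i j ^ 2) ^ (K / 2)) ^ (2 * ((m : ℝ) - 1) / K) *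
        (∑ i, ⨆ j, b i j ^ K) ^ (1 - 2 * ((m : ℝ) - 1) / K) := by
  obtain ⟨M, rfl⟩ := Nat.exists_eq_add_one.mpr (Fin.pos_iff_nonempty.mpr hG.nonempty)
  rw [Nat.cast_add, Nat.cast_one, add_sub_cancel_right]
  rcases M.eq_zero_or_pos with rfl | hM
  · have hE : G.edgeFinset = ∅ := by
      ext e
      induction e using Sym2.ind with
      | _ a c => simp [Subsingleton.elim (α := Fin 1) a c]
    rcases n with _ | n <;> simp [hE, hK]
  · exact sum_prod_edgeValS_rpow_le hM G hG.preconnected k hk hK b hbnn hbsym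
end

section
/- Let G = (G_1, ..., G_n) be independent with G_i ~ N(0, σ_i²). Then for 2 ≤ p < ∞, E‖G‖_{ℓ_p} ≥ c[max_{i ≤ e^p} σ_i^* √(log(i+1)) + √p (∑_{i ≥ e^p} (σ_i^*)^p)^{1/p}] for a universal constant c > 0. -/
/-!
Both terms are bounded by `E‖G‖_p` separately, using only that `‖G‖_p` dominates each `|G_j|`
and each partial sum `(∑_{j ∈ s} |G_j|^p)^{1/p}`.

Head: the `k = i + 1` largest coordinates all have standard deviation at least `τ = σ^*_i`, and
each exceeds `t = τ √(log (k + 1) / 2)` with probability at least `e^{-2} / √(k + 1)`. By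
independence none of them does with probability at most `exp (-e^{-3})`, so Markov's inequality
gives `τ √(log (k + 1)) ≲ E‖G‖_p`.

Tail: let `τ` be the largest standard deviation in the tail and `T = ∑ σ_j^p` over it. The tail
starts at an index `m` with `p ≤ log (m + 2)`, so the head bound controls `√p τ`, which settles
the case `T ≤ (e^6 τ)^p`. Otherwise `S = ∑ |G_j|^p` has mean `≳ p^{p/2} e^{-p} T` and variance
`≲ (2p)^p τ^p T`, since Gaussian absolute moments satisfy `E|N(0, τ²)|^q = (τ √q)^q e^{O(q)}`
(lower bound from the tail, upper bound from the moment generating function). Chebyshev then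
gives `S ≥ E S / 2` with probability at least `1/2`, whence `√p T^{1/p} ≲ E‖G‖_p`.
-/

open Real MeasureTheory ProbabilityTheory Set Finset
open scoped NNReal ENNReal

lemma rpow_le_mul_exp {q y : ℝ} (hq : 0 < q) (hy : 0 ≤ y) :
    y ^ q ≤ (q / exp 1) ^ q * exp y := by
  have hlin : y ≤ q * exp (y / q - 1) := by
    have := add_one_le_exp (y / q - 1)
    rw [sub_add_cancel, div_le_iff₀ hq] at this
    linarith
  calc y ^ q ≤ (q * exp (y / q - 1)) ^ q := by gcongr
    _ = (q / exp 1) ^ q * exp y := by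
      rw [mul_rpow hq.le (exp_pos _).le, div_rpow hq.le (exp_pos _).le, ← exp_mul, ← exp_mul,
        sub_mul, div_mul_cancel₀ _ hq.ne', one_mul, exp_sub]
      ring

lemma exp_add_exp_le {a b c : ℝ} (ha : a + 1 ≤ c) (hb : b + 1 ≤ c) : exp a + exp b ≤ exp c := by
  have h2 : 2 * exp (c - 1) ≤ exp c := by
    rw [show c = 1 + (c - 1) by ring, exp_add, add_sub_cancel_left]
    gcongr; linarith [exp_one_gt_d9]
  have := exp_le_exp.2 (show a ≤ c - 1 by linarith)
  have := exp_le_exp.2 (show b ≤ c - 1 by linarith)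
  linarith

lemma exp_neg_one_le_mul_exp_neg_log_div_two {k : ℝ} (hk : 1 ≤ k) :
    exp (-1) ≤ k * exp (-(log (k + 1) / 2)) := by
  have hsqrt : exp (log (k + 1) / 2) = √(k + 1) := by
    rw [sqrt_eq_rpow, rpow_def_of_pos (by linarith), mul_one_div]
  have hle : √(k + 1) ≤ exp 1 * k := by
    have h4 : 4 * k ^ 2 ≤ (exp 1 * k) ^ 2 := by
      rw [mul_pow]; gcongr; nlinarith [exp_one_gt_d9]
    rw [sqrt_le_left (by positivity)]
    nlinarith
  rwa [exp_neg, exp_neg, hsqrt, ← div_eq_mul_inv, le_div_iff₀ (by positivity),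
    inv_mul_le_iff₀ (exp_pos 1)]

lemma exp_neg_four_le_one_sub_exp_neg_exp_neg_three :
    exp (-4) ≤ 1 - exp (-exp (-3)) := by
  set δ := exp (-3)
  have hδ : δ ≤ 1 := exp_le_one_iff.2 (by norm_num)
  have hinv : (1 + δ) * exp (-δ) ≤ 1 := by
    have := mul_le_mul_of_nonneg_right (add_one_le_exp δ) (exp_pos (-δ)).le
    rwa [← exp_add, add_neg_cancel, exp_zero, add_comm] at this
  have hsplit : exp (-4) * exp 1 = δ := by rw [← exp_add]; norm_num [δ]
  have he : exp (-4) * (1 + δ) ≤ δ := by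
    rw [← hsplit]
    exact mul_le_mul_of_nonneg_left (by linarith [exp_one_gt_d9]) (exp_pos _).le
  have hδ0 : 0 < 1 + δ := by positivity
  nlinarith

lemma sixteen_mul_two_rpow_mul_exp_le {p : ℝ} (hp : 2 ≤ p) :
    16 * 2 ^ p * exp (4 + p) ≤ exp (6 * p) := by
  have h2 : (2 : ℝ) ^ p ≤ exp p := by
    rw [← exp_one_rpow]
    exact rpow_le_rpow (by norm_num) (by linarith [exp_one_gt_d9]) (by linarith)
  have h16 : (16 : ℝ) ≤ exp 4 := by
    calc (16 : ℝ) = 2 ^ 4 := by norm_num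
      _ ≤ exp 1 ^ 4 := pow_le_pow_left₀ zero_le_two (by linarith [exp_one_gt_d9]) 4
      _ = exp 4 := by rw [← exp_nat_mul]; norm_num
  calc 16 * 2 ^ p * exp (4 + p) ≤ exp 4 * exp p * exp (4 + p) := by gcongr
    _ = exp (8 + 2 * p) := by rw [← exp_add, ← exp_add]; ring_nf
    _ ≤ exp (6 * p) := exp_le_exp.2 (by linarith)

lemma exp_neg_three_mul_sqrt_rpow_le {p : ℝ} (hp : 3 / 2 ≤ p) :
    (exp (-3) * √p) ^ p ≤ p ^ (p / 2) * exp (-2 - p) / 2 := by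
  have hp0 : 0 < p := by linarith
  rw [mul_rpow (exp_pos _).le (sqrt_nonneg p), ← exp_mul, sqrt_eq_rpow, ← rpow_mul hp0.le,
    mul_comm (1 / 2) p, ← div_eq_mul_one_div, mul_comm, mul_div_assoc]
  gcongr
  rw [le_div_iff₀ two_pos]
  calc exp (-3 * p) * 2 ≤ exp (-3 * p) * exp 1 := by gcongr; linarith [exp_one_gt_d9]
    _ = exp (1 - 3 * p) := by rw [← exp_add]; ring_nf
    _ ≤ exp (-2 - p) := exp_le_exp.2 (by linarith)

lemma abs_le_rpow_sum_abs_rpow {ι : Type*} {s : Finset ι} (x : ι → ℝ) {p : ℝ} (hp : 0 < p)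
    {j : ι} (hj : j ∈ s) : |x j| ≤ (∑ i ∈ s, |x i| ^ p) ^ (1 / p) := by
  calc |x j| = (|x j| ^ p) ^ (1 / p) := by rw [one_div, rpow_rpow_inv (abs_nonneg _) hp.ne']
    _ ≤ _ := by
      gcongr
      exact single_le_sum (f := fun i ↦ |x i| ^ p) (fun i _ ↦ by positivity) hj

lemma exp_neg_sub_sq_le_gaussianPDFReal {u x : ℝ} (hu : 0 ≤ u) (hx : x ∈ Icc u (u + 1)) :
    exp (-2 - u ^ 2) ≤ gaussianPDFReal 0 1 x := by
  have hsqrt : √(2 * π) ≤ exp 1 := by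
    rw [sqrt_le_left (exp_pos 1).le]
    nlinarith [exp_one_gt_d9, pi_lt_d2]
  have hconst : exp (-1) ≤ (√(2 * π))⁻¹ := by
    rw [exp_neg]
    exact inv_anti₀ (by positivity) hsqrt
  have hexp : exp (-1 - u ^ 2) ≤ exp (-x ^ 2 / 2) := by
    have hx2 : x ^ 2 ≤ (u + 1) ^ 2 := pow_le_pow_left₀ (hu.trans hx.1) hx.2 2
    gcongr
    nlinarith [sq_nonneg (u - 1)]
  rw [gaussianPDFReal_def, show -2 - u ^ 2 = -1 + (-1 - u ^ 2) by ring, exp_add]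
  simpa using mul_le_mul hconst hexp (exp_pos _).le (by positivity)

lemma exp_neg_sub_sq_le_gaussianReal_Ici {u : ℝ} (hu : 0 ≤ u) :
    exp (-2 - u ^ 2) ≤ (gaussianReal 0 1).real (Ici u) := by
  have hIcc : exp (-2 - u ^ 2) ≤ (gaussianReal 0 1).real (Icc u (u + 1)) := by
    rw [measureReal_def, gaussianReal_apply_eq_integral _ one_ne_zero,
      ENNReal.toReal_ofReal (setIntegral_nonneg measurableSet_Icc
        fun x _ ↦ gaussianPDFReal_nonneg 0 1 x)]
    simpa using setIntegral_ge_of_const_le_real measurableSet_Icc (by simp)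
      (fun x hx ↦ exp_neg_sub_sq_le_gaussianPDFReal hu hx)
      (integrable_gaussianPDFReal 0 1).integrableOn
  exact hIcc.trans (measureReal_mono Icc_subset_Ici_self)

lemma gaussianReal_zero_one_map_const_mul {τ : ℝ} (hτ : 0 < τ) :
    (gaussianReal 0 1).map (τ * ·) = gaussianReal 0 (τ ^ 2).toNNReal := by
  rw [gaussianReal_map_const_mul, mul_zero, mul_one]
  congr 1
  ext
  simp [hτ.le]

lemma exp_neg_sub_div_sq_le_gaussianReal_Ici {τ t : ℝ} (hτ : 0 < τ) (ht : 0 ≤ t) :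
    exp (-2 - (t / τ) ^ 2) ≤ (gaussianReal 0 (τ ^ 2).toNNReal).real (Ici t) := by
  rw [← gaussianReal_zero_one_map_const_mul hτ,
    map_measureReal_apply (measurable_const_mul τ) measurableSet_Ici]
  convert exp_neg_sub_sq_le_gaussianReal_Ici (div_nonneg ht hτ.le) using 2
  ext y
  simp [div_le_iff₀' hτ]

lemma integrable_abs_rpow_gaussianReal (m : ℝ) (v : ℝ≥0) {q : ℝ} (hq : 0 ≤ q) :
    Integrable (fun x ↦ |x| ^ q) (gaussianReal m v) := by
  simpa [ENNReal.toReal_ofReal hq] using (memLp_id_gaussianReal' (μ := m) (v := v)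
    (ENNReal.ofReal q) ENNReal.ofReal_ne_top).integrable_norm_rpow'

lemma integral_exp_mul_gaussianReal (v : ℝ≥0) (t : ℝ) :
    ∫ x, exp (t * x) ∂gaussianReal 0 v = exp (v * t ^ 2 / 2) := by
  simpa [mgf] using congrFun (mgf_fun_id_gaussianReal (μ := 0) (v := v)) t

lemma integral_abs_rpow_gaussianReal_le {τ q : ℝ} (hτ : 0 < τ) (hq : 0 < q) :
    ∫ x, |x| ^ q ∂gaussianReal 0 (τ ^ 2).toNNReal ≤ 2 * τ ^ q * q ^ (q / 2) * exp (-(q / 2)) := by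
  set t := √q / τ with ht_def
  have ht : 0 < t := by positivity
  set C := (q / exp 1) ^ q / t ^ q
  have hpt : ∀ x : ℝ, |x| ^ q ≤ C * (exp (t * x) + exp (-t * x)) := by
    intro x
    have hmain := rpow_le_mul_exp hq (mul_nonneg ht.le (abs_nonneg x))
    rw [mul_rpow ht.le (abs_nonneg x)] at hmain
    have habs : exp (t * |x|) ≤ exp (t * x) + exp (-t * x) := by
      rcases abs_cases x with ⟨h, -⟩ | ⟨h, -⟩
      · rw [h]; linarith [exp_pos (-t * x)]
      · rw [h, mul_neg, ← neg_mul]; linarith [exp_pos (t * x)]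
    calc |x| ^ q ≤ C * exp (t * |x|) := by
          rw [div_mul_eq_mul_div, le_div_iff₀' (rpow_pos_of_pos ht q)]; exact hmain
      _ ≤ C * (exp (t * x) + exp (-t * x)) := by gcongr
  have hint : ∀ s : ℝ, Integrable (fun x ↦ exp (s * x)) (gaussianReal 0 (τ ^ 2).toNNReal) :=
    integrable_exp_mul_gaussianReal
  have hvar : ((τ ^ 2).toNNReal : ℝ) * t ^ 2 / 2 = q / 2 := by
    rw [Real.coe_toNNReal _ (sq_nonneg τ), ht_def, div_pow, sq_sqrt hq.le]
    field_simp
  calc ∫ x, |x| ^ q ∂gaussianReal 0 (τ ^ 2).toNNReal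
      ≤ ∫ x, C * (exp (t * x) + exp (-t * x)) ∂gaussianReal 0 (τ ^ 2).toNNReal :=
        integral_mono (integrable_abs_rpow_gaussianReal _ _ hq.le)
          (((hint t).add (hint (-t))).const_mul C) hpt
    _ = 2 * C * exp (q / 2) := by
        rw [integral_const_mul, integral_add (hint t) (hint (-t)),
          integral_exp_mul_gaussianReal, integral_exp_mul_gaussianReal, neg_sq, hvar]
        ring
    _ = 2 * τ ^ q * q ^ (q / 2) * exp (-(q / 2)) := by
        have hqt : q / t = τ * √q := by
          rw [ht_def, div_div_eq_mul_div, mul_comm, mul_div_assoc, div_sqrt]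
        have hsq : √q ^ q = q ^ (q / 2) := by
          rw [sqrt_eq_rpow, ← rpow_mul hq.le]; ring_nf
        simp only [C]
        rw [← div_rpow (by positivity) ht.le, div_right_comm, hqt, div_rpow (by positivity)
          (exp_pos 1).le, mul_rpow hτ.le (sqrt_nonneg q), hsq, ← exp_mul, one_mul,
          show -(q / 2) = q / 2 - q by ring, exp_sub]
        ring

lemma integral_abs_rpow_gaussianReal_ge {τ q : ℝ} (hτ : 0 < τ) (hq : 0 < q) :
    τ ^ q * q ^ (q / 2) * exp (-2 - q) ≤ ∫ x, |x| ^ q ∂gaussianReal 0 (τ ^ 2).toNNReal := by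
  have hε : τ ^ q * q ^ (q / 2) = (τ * √q) ^ q := by
    rw [mul_rpow hτ.le (sqrt_nonneg q), sqrt_eq_rpow, ← rpow_mul hq.le]; ring_nf
  have htail := exp_neg_sub_div_sq_le_gaussianReal_Ici hτ (by positivity : 0 ≤ τ * √q)
  rw [mul_div_cancel_left₀ _ hτ.ne', sq_sqrt hq.le] at htail
  rw [hε]
  calc (τ * √q) ^ q * exp (-2 - q)
      ≤ (τ * √q) ^ q * (gaussianReal 0 (τ ^ 2).toNNReal).real {x | (τ * √q) ^ q ≤ |x| ^ q} := by
        gcongr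
        exact htail.trans (measureReal_mono fun x (hx : τ * √q ≤ x) ↦
          rpow_le_rpow (by positivity) (hx.trans (le_abs_self x)) hq.le)
    _ ≤ _ := mul_meas_ge_le_integral_of_nonneg (ae_of_all _ fun x ↦ by positivity)
        (integrable_abs_rpow_gaussianReal _ _ hq.le) _

lemma integrable_rpow_sum_abs_rpow {ι Ω : Type*} [MeasurableSpace Ω] {μ : Measure Ω}
    [IsFiniteMeasure μ] [Fintype ι] {G : ι → Ω → ℝ} {p : ℝ} (hp : 1 ≤ p)
    (hG : ∀ i, MemLp (G i) (ENNReal.ofReal p) μ) :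
    Integrable (fun ω ↦ (∑ i, |G i ω| ^ p) ^ (1 / p)) μ := by
  have hint : ∀ i, Integrable (fun ω ↦ |G i ω| ^ p) μ := fun i ↦ by
    simpa [ENNReal.toReal_ofReal (zero_le_one.trans hp)] using (hG i).integrable_norm_rpow'
  refine ((integrable_const 1).add (integrable_finsetSum univ fun i _ ↦ hint i)).mono' ?_
    (ae_of_all _ fun ω ↦ ?_)
  · have := fun i ↦ (hG i).aestronglyMeasurable
    fun_prop (disch := positivity)
  · simp only [Pi.add_apply]
    set y := ∑ i, |G i ω| ^ p
    have hy : 0 ≤ y := by positivity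
    rw [norm_of_nonneg (by positivity)]
    rcases le_total y 1 with h | h
    · linarith [rpow_le_one hy h (by positivity : 0 ≤ 1 / p)]
    · have : y ^ (1 / p) ≤ y ^ (1 : ℝ) :=
        rpow_le_rpow_of_exponent_le h (by rw [div_le_one (by linarith)]; exact hp)
      rw [rpow_one] at this
      linarith

section Probability

variable {Ω : Type*} [MeasurableSpace Ω] {μ : Measure Ω} [IsProbabilityMeasure μ]

lemma one_sub_le_measureReal_of_compl_subset {s t : Set Ω} (h : sᶜ ⊆ t) :
    1 - μ.real t ≤ μ.real s := by
  have := measureReal_union_le (μ := μ) s sᶜ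
  rw [union_compl_self, probReal_univ] at this
  linarith [measureReal_mono (μ := μ) h]

lemma one_sub_four_mul_variance_div_le_measureReal {S : Ω → ℝ} (hS : MemLp S 2 μ)
    (hpos : 0 < μ[S]) : 1 - 4 * Var[S; μ] / μ[S] ^ 2 ≤ μ.real {ω | μ[S] / 2 ≤ S ω} := by
  have hcheb : μ.real {ω | μ[S] / 2 ≤ |S ω - μ[S]|} ≤ 4 * Var[S; μ] / μ[S] ^ 2 := by
    refine ENNReal.toReal_le_of_le_ofReal (by positivity [variance_nonneg S μ]) ?_
    convert meas_ge_le_variance_div_sq hS (half_pos hpos) using 2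
    ring
  refine le_trans ?_ (one_sub_le_measureReal_of_compl_subset
    (t := {ω | μ[S] / 2 ≤ |S ω - μ[S]|}) fun ω hω ↦ ?_)
  · linarith
  · simp only [mem_compl_iff, mem_ofPred_eq, not_le] at hω ⊢
    rw [abs_sub_comm, abs_of_pos (by linarith)]
    linarith

end Probability

section IndependentGaussians

variable {ι Ω : Type*} [MeasurableSpace Ω] {μ : Measure Ω}

lemma ProbabilityTheory.HasLaw.memLp_of_gaussianReal {X : Ω → ℝ} {m : ℝ} {v : ℝ≥0}
    (hX : HasLaw X (gaussianReal m v) μ) {q : ℝ≥0∞} (hq : q ≠ ∞) : MemLp X q μ :=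
  (memLp_map_measure_iff aestronglyMeasurable_id hX.aemeasurable).1
    (hX.map_eq ▸ memLp_id_gaussianReal' q hq)

lemma ProbabilityTheory.HasLaw.memLp_two_abs_rpow {X : Ω → ℝ} {m : ℝ} {v : ℝ≥0}
    (hX : HasLaw X (gaussianReal m v) μ) {p : ℝ} (hp : 0 < p) :
    MemLp (fun ω ↦ |X ω| ^ p) 2 μ := by
  have := (hX.memLp_of_gaussianReal (q := ENNReal.ofReal (2 * p))
    ENNReal.ofReal_ne_top).norm_rpow_div (ENNReal.ofReal p)
  rwa [← ENNReal.ofReal_div_of_pos hp, mul_div_cancel_right₀ _ hp.ne', ENNReal.ofReal_ofNat,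
    ENNReal.toReal_ofReal hp.le] at this

lemma ProbabilityTheory.HasLaw.integral_abs_rpow_le {X : Ω → ℝ} {τ q : ℝ}
    (hX : HasLaw X (gaussianReal 0 (τ ^ 2).toNNReal) μ) (hτ : 0 < τ) (hq : 0 < q) :
    ∫ ω, |X ω| ^ q ∂μ ≤ 2 * τ ^ q * q ^ (q / 2) * exp (-(q / 2)) :=
  (hX.integral_comp (integrable_abs_rpow_gaussianReal _ _ hq.le).aestronglyMeasurable).trans_le
    (integral_abs_rpow_gaussianReal_le hτ hq)

lemma ProbabilityTheory.HasLaw.le_integral_abs_rpow {X : Ω → ℝ} {τ q : ℝ}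
    (hX : HasLaw X (gaussianReal 0 (τ ^ 2).toNNReal) μ) (hτ : 0 < τ) (hq : 0 < q) :
    τ ^ q * q ^ (q / 2) * exp (-2 - q) ≤ ∫ ω, |X ω| ^ q ∂μ :=
  (integral_abs_rpow_gaussianReal_ge hτ hq).trans_eq
    (hX.integral_comp (integrable_abs_rpow_gaussianReal _ _ hq.le).aestronglyMeasurable).symm

lemma ProbabilityTheory.HasLaw.measureReal_lt_le {X : Ω → ℝ} {τ t : ℝ}
    (hX : HasLaw X (gaussianReal 0 (τ ^ 2).toNNReal) μ) (hτ : 0 < τ) (ht : 0 ≤ t) :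
    μ.real {ω | X ω < t} ≤ 1 - exp (-2 - (t / τ) ^ 2) := by
  rw [hX.measureReal_eq (p := (· < t)) measurableSet_Iio,
    show {y : ℝ | y < t} = (Ici t)ᶜ by ext; simp, probReal_compl_eq_one_sub measurableSet_Ici]
  linarith [exp_neg_sub_div_sq_le_gaussianReal_Ici hτ ht]

variable [IsProbabilityMeasure μ] {G : ι → Ω → ℝ} {σ : ι → ℝ}

lemma ProbabilityTheory.HasLaw.variance_abs_rpow_le {X : Ω → ℝ} {τ p : ℝ}
    (hX : HasLaw X (gaussianReal 0 (τ ^ 2).toNNReal) μ) (hτ : 0 < τ) (hp : 0 < p) :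
    Var[fun ω ↦ |X ω| ^ p; μ] ≤ 2 * 2 ^ p * (p ^ (p / 2)) ^ 2 * exp (-p) * τ ^ p * τ ^ p := by
  have h2p : (2 * p) ^ (2 * p / 2) = 2 ^ p * (p ^ (p / 2)) ^ 2 := by
    rw [mul_div_cancel_left₀ _ two_ne_zero, mul_rpow zero_le_two hp.le, ← rpow_natCast,
      ← rpow_mul hp.le]
    norm_num
  calc Var[fun ω ↦ |X ω| ^ p; μ] ≤ μ[(fun ω ↦ |X ω| ^ p) ^ 2] :=
        variance_le_expectation_sq (hX.memLp_two_abs_rpow hp).aestronglyMeasurable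
    _ = ∫ ω, |X ω| ^ (2 * p) ∂μ := by
        congr 1 with ω
        simp only [Pi.pow_apply, ← rpow_natCast, ← rpow_mul (abs_nonneg _)]
        ring_nf
    _ ≤ 2 * τ ^ (2 * p) * (2 * p) ^ (2 * p / 2) * exp (-(2 * p / 2)) :=
        hX.integral_abs_rpow_le hτ (by positivity)
    _ = 2 * 2 ^ p * (p ^ (p / 2)) ^ 2 * exp (-p) * τ ^ p * τ ^ p := by
        rw [h2p, mul_div_cancel_left₀ _ two_ne_zero, two_mul p, rpow_add hτ]
        ring

lemma exp_neg_four_le_measureReal_exists_le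
    (hG : ∀ i, HasLaw (G i) (gaussianReal 0 (σ i ^ 2).toNNReal) μ) (hσ : ∀ i, 0 < σ i)
    (hindep : iIndepFun G μ) {s : Finset ι} (hs : s.Nonempty) {τ : ℝ} (hτ : 0 ≤ τ)
    (hτs : ∀ j ∈ s, τ ≤ σ j) :
    exp (-4) ≤ μ.real {ω | ∃ j ∈ s, τ * √(log (#s + 1) / 2) ≤ G j ω} := by
  set u := √(log (#s + 1) / 2)
  have hu : 0 ≤ u := sqrt_nonneg _
  have hu2 : u ^ 2 = log (#s + 1) / 2 :=
    sq_sqrt (div_nonneg (log_nonneg (by simp)) zero_le_two)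
  set t := τ * u
  have ht : 0 ≤ t := mul_nonneg hτ hu
  set x := exp (-2 - u ^ 2)
  have hbelow : ∀ j ∈ s, μ.real {ω | G j ω < t} ≤ 1 - x := fun j hj ↦ by
    have htu : t / σ j ≤ u := by
      rw [div_le_iff₀ (hσ j), mul_comm u]; exact mul_le_mul_of_nonneg_right (hτs j hj) hu
    have : x ≤ exp (-2 - (t / σ j) ^ 2) :=
      exp_le_exp.2 (by linarith [pow_le_pow_left₀ (div_nonneg ht (hσ j).le) htu 2])
    linarith [(hG j).measureReal_lt_le (hσ j) ht]
  have hall : μ.real {ω | ∀ j ∈ s, G j ω < t} ≤ exp (-exp (-3)) := by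
    have hprod : μ {ω | ∀ j ∈ s, G j ω < t} = ∏ j ∈ s, μ {ω | G j ω < t} := by
      convert hindep.meas_biInter (S := s) (s := fun j ↦ {ω | G j ω < t})
        fun j _ ↦ ⟨Set.Iio t, measurableSet_Iio, rfl⟩ using 2
      ext ω; simp
    have hkx : exp (-3) ≤ #s * x := by
      have := exp_neg_one_le_mul_exp_neg_log_div_two (k := #s) (by exact_mod_cast hs.card_pos)
      have hx : x = exp (-2) * exp (-(log (#s + 1) / 2)) := by
        simp only [x]; rw [hu2, ← exp_add]; ring_nf
      rw [hx, mul_left_comm]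
      calc exp (-3) = exp (-2) * exp (-1) := by rw [← exp_add]; norm_num
        _ ≤ _ := by gcongr
    calc μ.real {ω | ∀ j ∈ s, G j ω < t} = ∏ j ∈ s, μ.real {ω | G j ω < t} := by
          rw [measureReal_def, hprod, ENNReal.toReal_prod]; rfl
      _ ≤ ∏ _j ∈ s, exp (-x) :=
          prod_le_prod (fun _ _ ↦ measureReal_nonneg)
            fun j hj ↦ (hbelow j hj).trans (by linarith [one_sub_le_exp_neg x])
      _ = exp (-(#s * x)) := by rw [prod_const, ← exp_nat_mul]; ring_nf
      _ ≤ exp (-exp (-3)) := by gcongr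
  refine exp_neg_four_le_one_sub_exp_neg_exp_neg_three.trans ?_
  refine (sub_le_sub_left hall 1).trans (one_sub_le_measureReal_of_compl_subset fun ω hω ↦ ?_)
  simp only [mem_compl_iff, mem_ofPred_eq, not_exists, not_and, not_le] at hω
  exact hω

lemma mul_sqrt_log_le_integral [Fintype ι]
    (hG : ∀ i, HasLaw (G i) (gaussianReal 0 (σ i ^ 2).toNNReal) μ) (hσ : ∀ i, 0 < σ i)
    (hindep : iIndepFun G μ) {s : Finset ι} (hs : s.Nonempty) {τ : ℝ} (hτ : 0 ≤ τ)
    (hτs : ∀ j ∈ s, τ ≤ σ j) {p : ℝ} (hp : 1 ≤ p) :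
    τ * √(log (#s + 1)) ≤ exp 5 * ∫ ω, (∑ i, |G i ω| ^ p) ^ (1 / p) ∂μ := by
  set t := τ * √(log (#s + 1) / 2)
  have ht : 0 ≤ t := mul_nonneg hτ (sqrt_nonneg _)
  have hint := integrable_rpow_sum_abs_rpow hp fun i ↦
    (hG i).memLp_of_gaussianReal ENNReal.ofReal_ne_top
  have hmarkov : t * exp (-4) ≤ ∫ ω, (∑ i, |G i ω| ^ p) ^ (1 / p) ∂μ := by
    refine le_trans ?_ (mul_meas_ge_le_integral_of_nonneg (ae_of_all _ fun ω ↦ by positivity)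
      hint t)
    refine mul_le_mul_of_nonneg_left ((exp_neg_four_le_measureReal_exists_le hG hσ hindep hs hτ
      hτs).trans (measureReal_mono ?_)) ht
    rintro ω ⟨j, -, hj⟩
    exact hj.trans ((le_abs_self _).trans
      (abs_le_rpow_sum_abs_rpow (fun i ↦ G i ω) (zero_lt_one.trans_le hp) (mem_univ j)))
  have hsqrt : √(log (#s + 1)) ≤ exp 1 * √(log (#s + 1) / 2) := by
    have h2 : √2 ≤ exp 1 := by
      rw [sqrt_le_left (exp_pos 1).le]; nlinarith [exp_one_gt_d9]
    rw [sqrt_div' _ zero_le_two, mul_div_assoc', le_div_iff₀ (by positivity), mul_comm]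
    exact mul_le_mul_of_nonneg_right h2 (sqrt_nonneg _)
  calc τ * √(log (#s + 1)) ≤ exp 1 * t := by
        rw [mul_left_comm]; exact mul_le_mul_of_nonneg_left hsqrt hτ
    _ ≤ exp 1 * (exp 4 * ∫ ω, (∑ i, |G i ω| ^ p) ^ (1 / p) ∂μ) := by
        have h := mul_le_mul_of_nonneg_left hmarkov (exp_pos 4).le
        rw [mul_left_comm, ← exp_add, show (4 : ℝ) + -4 = 0 by norm_num, exp_zero,
          mul_one] at h
        gcongr
    _ = exp 5 * ∫ ω, (∑ i, |G i ω| ^ p) ^ (1 / p) ∂μ := by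
        rw [← mul_assoc, ← exp_add]; norm_num

lemma le_integral_sum_abs_rpow
    (hG : ∀ i, HasLaw (G i) (gaussianReal 0 (σ i ^ 2).toNNReal) μ) (hσ : ∀ i, 0 < σ i)
    {p : ℝ} (hp : 0 < p) (s : Finset ι) :
    p ^ (p / 2) * exp (-2 - p) * ∑ j ∈ s, σ j ^ p ≤ ∫ ω, ∑ j ∈ s, |G j ω| ^ p ∂μ := by
  rw [integral_finsetSum s fun j _ ↦ ((hG j).memLp_two_abs_rpow hp).integrable one_le_two,
    mul_sum]
  refine sum_le_sum fun j _ ↦ ?_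
  linarith [(hG j).le_integral_abs_rpow (hσ j) hp]

lemma variance_sum_abs_rpow_le
    (hG : ∀ i, HasLaw (G i) (gaussianReal 0 (σ i ^ 2).toNNReal) μ) (hσ : ∀ i, 0 < σ i)
    (hindep : iIndepFun G μ) {p : ℝ} (hp : 0 < p) {s : Finset ι} {τ : ℝ}
    (hsτ : ∀ j ∈ s, σ j ≤ τ) :
    Var[fun ω ↦ ∑ j ∈ s, |G j ω| ^ p; μ] ≤
      2 * 2 ^ p * (p ^ (p / 2)) ^ 2 * exp (-p) * τ ^ p * ∑ j ∈ s, σ j ^ p := by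
  rw [← Finset.sum_fn s fun j ω ↦ |G j ω| ^ p, IndepFun.variance_sum
    (fun j _ ↦ (hG j).memLp_two_abs_rpow hp) fun i _ j _ hij ↦
      (hindep.indepFun hij).comp (φ := fun x ↦ |x| ^ p) (ψ := fun x ↦ |x| ^ p)
        (by fun_prop) (by fun_prop), mul_sum]
  refine sum_le_sum fun j hj ↦ ((hG j).variance_abs_rpow_le (hσ j) hp).trans ?_
  exact mul_le_mul_of_nonneg_right (mul_le_mul_of_nonneg_left
    (rpow_le_rpow (hσ j).le (hsτ j hj) hp.le) (by positivity)) (rpow_nonneg (hσ j).le p)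

lemma half_le_measureReal_le_sum_abs_rpow
    (hG : ∀ i, HasLaw (G i) (gaussianReal 0 (σ i ^ 2).toNNReal) μ) (hσ : ∀ i, 0 < σ i)
    (hindep : iIndepFun G μ) {p : ℝ} (hp : 2 ≤ p) {s : Finset ι} {τ : ℝ} (hτ : 0 ≤ τ)
    (hsτ : ∀ j ∈ s, σ j ≤ τ) (hT : (exp 6 * τ) ^ p < ∑ j ∈ s, σ j ^ p) :
    1 / 2 ≤ μ.real {ω | (exp (-3) * √p) ^ p * ∑ j ∈ s, σ j ^ p ≤ ∑ j ∈ s, |G j ω| ^ p} := by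
  have hp0 : 0 < p := by linarith
  set T := ∑ j ∈ s, σ j ^ p
  set A := p ^ (p / 2)
  set S := fun ω ↦ ∑ j ∈ s, |G j ω| ^ p
  have hmean : A * exp (-2 - p) * T ≤ μ[S] := le_integral_sum_abs_rpow hG hσ hp0 s
  have hvar := variance_sum_abs_rpow_le hG hσ hindep hp0 hsτ
  have hB : 16 * 2 ^ p * exp (4 + p) * τ ^ p ≤ T := by
    calc 16 * 2 ^ p * exp (4 + p) * τ ^ p ≤ exp (6 * p) * τ ^ p := by
          gcongr; exact sixteen_mul_two_rpow_mul_exp_le hp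
      _ = (exp 6 * τ) ^ p := by rw [mul_rpow (exp_pos 6).le hτ, ← exp_mul]
      _ ≤ T := hT.le
  have hT0 : 0 < T := (rpow_nonneg (by positivity) p).trans_lt hT
  have hES : 0 < μ[S] := (by positivity : 0 < A * exp (-2 - p) * T).trans_le hmean
  have hratio : 4 * Var[S; μ] / μ[S] ^ 2 ≤ 1 / 2 := by
    have hexp : exp (-p) = exp (-2 - p) ^ 2 * exp (4 + p) := by
      rw [sq, ← exp_add, ← exp_add]; ring_nf
    rw [div_le_iff₀ (by positivity)]
    calc 4 * Var[S; μ] ≤ 4 * (2 * 2 ^ p * A ^ 2 * exp (-p) * τ ^ p * T) := by gcongr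
      _ = 1 / 2 * (A * exp (-2 - p)) ^ 2 * T * (16 * 2 ^ p * exp (4 + p) * τ ^ p) := by
          rw [hexp]; ring
      _ ≤ 1 / 2 * (A * exp (-2 - p)) ^ 2 * T * T := by gcongr
      _ = 1 / 2 * (A * exp (-2 - p) * T) ^ 2 := by ring
      _ ≤ 1 / 2 * μ[S] ^ 2 := by gcongr
  have hthreshold : (exp (-3) * √p) ^ p * T ≤ μ[S] / 2 :=
    calc (exp (-3) * √p) ^ p * T ≤ A * exp (-2 - p) / 2 * T := by
          gcongr; exact exp_neg_three_mul_sqrt_rpow_le (by linarith)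
      _ ≤ μ[S] / 2 := by linarith
  refine le_trans (by linarith) ((one_sub_four_mul_variance_div_le_measureReal
    (memLp_finsetSum s fun j _ ↦ (hG j).memLp_two_abs_rpow hp0) hES).trans
      (measureReal_mono fun ω hω ↦ hthreshold.trans hω))

lemma sqrt_mul_rpow_sum_le [Fintype ι]
    (hG : ∀ i, HasLaw (G i) (gaussianReal 0 (σ i ^ 2).toNNReal) μ) (hσ : ∀ i, 0 < σ i)
    (hindep : iIndepFun G μ) {p : ℝ} (hp : 2 ≤ p) (s : Finset ι) {τ : ℝ} (hτ : 0 ≤ τ)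
    (hsτ : ∀ j ∈ s, σ j ≤ τ) :
    √p * (∑ j ∈ s, σ j ^ p) ^ (1 / p) ≤
      exp 6 * √p * τ + exp 4 * ∫ ω, (∑ i, |G i ω| ^ p) ^ (1 / p) ∂μ := by
  have hp0 : 0 < p := by linarith
  set T := ∑ j ∈ s, σ j ^ p
  have hT0 : 0 ≤ T := sum_nonneg fun j _ ↦ rpow_nonneg (hσ j).le p
  set I := ∫ ω, (∑ i, |G i ω| ^ p) ^ (1 / p) ∂μ
  have hI : 0 ≤ I := integral_nonneg fun ω ↦ by positivity
  rcases le_or_gt T ((exp 6 * τ) ^ p) with hT | hT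
  · have hroot : T ^ (1 / p) ≤ exp 6 * τ := by
      calc T ^ (1 / p) ≤ ((exp 6 * τ) ^ p) ^ (1 / p) := by gcongr
        _ = exp 6 * τ := by rw [one_div, rpow_rpow_inv (by positivity) hp0.ne']
    have := mul_le_mul_of_nonneg_left hroot (sqrt_nonneg p)
    nlinarith [exp_pos 4]
  · set c := exp (-3) * √p * T ^ (1 / p)
    have hc : c = ((exp (-3) * √p) ^ p * T) ^ (1 / p) := by
      rw [mul_rpow (by positivity) hT0, one_div, rpow_rpow_inv (by positivity) hp0.ne', ← one_div]
    have hint := integrable_rpow_sum_abs_rpow (by linarith) fun i ↦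
      (hG i).memLp_of_gaussianReal (q := ENNReal.ofReal p) ENNReal.ofReal_ne_top
    have hmarkov : c * (1 / 2) ≤ I := by
      refine le_trans ?_ (mul_meas_ge_le_integral_of_nonneg (ae_of_all _ fun ω ↦ by positivity)
        hint c)
      refine mul_le_mul_of_nonneg_left ((half_le_measureReal_le_sum_abs_rpow hG hσ hindep hp hτ
        hsτ hT).trans (measureReal_mono fun ω hω ↦ ?_)) (by positivity)
      rw [mem_ofPred_eq] at hω ⊢
      rw [hc]
      gcongr
      exact hω.trans (sum_le_sum_of_subset_of_nonneg (subset_univ s) fun i _ _ ↦ by positivity)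
    have he : 2 * exp 3 ≤ exp 4 := by
      rw [show (4 : ℝ) = 1 + 3 by norm_num, exp_add]
      gcongr; linarith [exp_one_gt_d9]
    calc √p * T ^ (1 / p) = exp 3 * c := by
          simp only [c]; rw [← mul_assoc, ← mul_assoc, ← exp_add]; norm_num
      _ ≤ exp 3 * (2 * I) := by gcongr; linarith
      _ ≤ exp 4 * I := by nlinarith
      _ ≤ _ := le_add_of_nonneg_left (by positivity)

end IndependentGaussians

section Rearrangement

variable {Ω : Type*} [MeasurableSpace Ω] {μ : Measure Ω} [IsProbabilityMeasure μ] {n : ℕ}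
  {G : Fin n → Ω → ℝ} {σ : Fin n → ℝ} {e : Equiv.Perm (Fin n)}

lemma mul_sqrt_log_le_integral_of_antitone
    (hG : ∀ i, HasLaw (G i) (gaussianReal 0 (σ i ^ 2).toNNReal) μ) (hσ : ∀ i, 0 < σ i)
    (hindep : iIndepFun G μ) (hmono : ∀ i j : Fin n, i ≤ j → σ (e j) ≤ σ (e i)) {p : ℝ}
    (hp : 1 ≤ p) (i : Fin n) :
    σ (e i) * √(log ((i : ℕ) + 2)) ≤ exp 5 * ∫ ω, (∑ i, |G i ω| ^ p) ^ (1 / p) ∂μ := by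
  have h := mul_sqrt_log_le_integral hG hσ hindep (s := (Finset.Iic i).map e.toEmbedding)
    ⟨e i, mem_map_of_mem _ (mem_Iic.2 le_rfl)⟩ (hσ _).le (fun j hj ↦ by
      obtain ⟨a, ha, rfl⟩ := mem_map.1 hj
      exact hmono a i (mem_Iic.1 ha)) hp
  rwa [card_map, Fin.card_Iic, Nat.cast_add, Nat.cast_one, add_assoc, one_add_one_eq_two] at h

lemma sqrt_mul_rpow_sum_tail_le
    (hG : ∀ i, HasLaw (G i) (gaussianReal 0 (σ i ^ 2).toNNReal) μ) (hσ : ∀ i, 0 < σ i)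
    (hindep : iIndepFun G μ) (hmono : ∀ i j : Fin n, i ≤ j → σ (e j) ≤ σ (e i)) {p : ℝ}
    (hp : 2 ≤ p) :
    √p * (∑ i : Fin n, if exp p ≤ ((i : ℕ) + 1 : ℝ) then σ (e i) ^ p else 0) ^ (1 / p) ≤
      exp 12 * ∫ ω, (∑ i, |G i ω| ^ p) ^ (1 / p) ∂μ := by
  have hp0 : 0 < p := by linarith
  set I := ∫ ω, (∑ i, |G i ω| ^ p) ^ (1 / p) ∂μ
  have hI : 0 ≤ I := integral_nonneg fun ω ↦ by positivity
  rw [← sum_filter]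
  set tail := univ.filter fun i : Fin n ↦ exp p ≤ ((i : ℕ) + 1 : ℝ)
  rcases tail.eq_empty_or_nonempty with h | h
  · rw [h, sum_empty, zero_rpow (by positivity), mul_zero]
    positivity
  set m := tail.min' h
  have hm : exp p ≤ (m : ℕ) + 1 := (mem_filter.1 (min'_mem tail h)).2
  have hlog : √p ≤ √(log ((m : ℕ) + 2)) := by
    gcongr
    rw [← log_exp p]
    exact log_le_log (exp_pos p) (by linarith)
  have hbound := sqrt_mul_rpow_sum_le hG hσ hindep hp (tail.map e.toEmbedding) (hσ (e m)).le
    fun j hj ↦ by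
      obtain ⟨a, ha, rfl⟩ := mem_map.1 hj
      exact hmono m a (min'_le tail a ha)
  rw [sum_map] at hbound
  have hhead : √p * σ (e m) ≤ exp 5 * I :=
    calc √p * σ (e m) ≤ σ (e m) * √(log ((m : ℕ) + 2)) := by
          rw [mul_comm]; exact mul_le_mul_of_nonneg_left hlog (hσ _).le
      _ ≤ _ := mul_sqrt_log_le_integral_of_antitone hG hσ hindep hmono (by linarith) m
  calc _ ≤ exp 6 * √p * σ (e m) + exp 4 * I := hbound
    _ ≤ exp 6 * (exp 5 * I) + exp 4 * I := by
        rw [mul_assoc]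
        exact add_le_add_left (mul_le_mul_of_nonneg_left hhead (exp_pos 6).le) _
    _ = (exp 11 + exp 4) * I := by rw [← mul_assoc, ← exp_add]; norm_num; ring
    _ ≤ exp 12 * I := by gcongr; exact exp_add_exp_le (by norm_num) (by norm_num)

end Rearrangement

/-- Lower bound for the expected `ℓ_p` norm of a vector of independent Gaussians
`G_i ~ N(0, σ_i²)`, `2 ≤ p < ∞`:
`E‖G‖_{ℓ_p} ≥ c (max_{i ≤ e^p} σ_i^* √(log(i+1)) + √p (∑_{i ≥ e^p} (σ_i^*)^p)^{1/p})`,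
where `σ^* = σ ∘ e` is the nonincreasing rearrangement of `σ` (via a permutation `e`). -/
theorem stmt9 : ∃ c : ℝ, 0 < c ∧
    ∀ (Ω : Type) (_ : MeasurableSpace Ω) (μ : Measure Ω), IsProbabilityMeasure μ →
    ∀ (n : ℕ) (G : Fin n → Ω → ℝ) (σ : Fin n → ℝ) (e : Equiv.Perm (Fin n)) (p : ℝ),
    2 ≤ p →
    (∀ i, 0 < σ i) →
    (∀ i, Measurable (G i)) →
    (∀ i, Measure.map (G i) μ = gaussianReal 0 (((σ i) ^ 2).toNNReal)) →
    iIndepFun G μ →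
    (∀ i j : Fin n, i ≤ j → σ (e j) ≤ σ (e i)) →
    c * ((⨆ i : Fin n, if ((i : ℕ) + 1 : ℝ) ≤ Real.exp p then
            σ (e i) * Real.sqrt (Real.log ((i : ℕ) + 2)) else 0)
      + Real.sqrt p *
          (∑ i : Fin n, if Real.exp p ≤ ((i : ℕ) + 1 : ℝ) then σ (e i) ^ p else 0)
            ^ (1 / p)) ≤
      ∫ ω, (∑ i, |G i ω| ^ p) ^ (1 / p) ∂μ := by
  refine ⟨exp (-13), exp_pos _, fun Ω _ μ _ n G σ e p hp hσ hG hmap hindep hmono ↦ ?_⟩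
  have hlaw : ∀ i, HasLaw (G i) (gaussianReal 0 (σ i ^ 2).toNNReal) μ :=
    fun i ↦ ⟨(hG i).aemeasurable, hmap i⟩
  set I := ∫ ω, (∑ i, |G i ω| ^ p) ^ (1 / p) ∂μ
  have hI : 0 ≤ I := integral_nonneg fun ω ↦ by positivity
  have hhead : (⨆ i : Fin n, if ((i : ℕ) + 1 : ℝ) ≤ exp p then
      σ (e i) * √(log ((i : ℕ) + 2)) else 0) ≤ exp 5 * I := by
    refine Real.iSup_le (fun i ↦ ?_) (by positivity)
    split_ifs
    · exact mul_sqrt_log_le_integral_of_antitone hlaw hσ hindep hmono (by linarith) i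
    · positivity
  calc _ ≤ exp (-13) * (exp 5 * I + exp 12 * I) :=
        mul_le_mul_of_nonneg_left (add_le_add hhead
          (sqrt_mul_rpow_sum_tail_le hlaw hσ hindep hmono hp)) (exp_pos _).le
    _ ≤ exp (-13) * (exp 13 * I) := by
        rw [← add_mul]
        gcongr
        exact exp_add_exp_le (by norm_num) (by norm_num)
    _ = I := by rw [← mul_assoc, ← exp_add]; norm_num
end

section
/- Let h be a real random variable satisfying C₁ p^β ≤ E[|h|^p]^{1/p} ≤ C₂ p^β for all p ≥ 2, with β > 0 and 0 < C₁ ≤ C₂. Then there exist constants c₁, c₂ > 0 depending only on C₁, C₂, β such that c₁ e^{−t^{1/β}/c₁} ≤ P[|h| ≥ t] ≤ c₂ e^{−t^{1/β}/c₂} for all t ≥ 0. -/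
/-!
For the upper tail, Markov's inequality for `|h|^p` with `p ≍ t^{1/β}` chosen so that
`C₂ p^β / t = e⁻¹` gives `P[|h| ≥ t] ≤ e^{-p}`. For the lower tail, the Paley–Zygmund inequality
for `|h|^p` gives `P[|h| ≥ t] ≥ E[|h|^p]² / (4 E[|h|^{2p}]) ≥ (C₁ / (C₂ 2^β))^{2p} / 4` as soon as
`2t ≤ C₁ p^β`, and the least such `p ≥ 2` is again of order `t^{1/β}`.
-/

open Real MeasureTheory ProbabilityTheory

section PaleyZygmund

variable {α : Type*} [MeasurableSpace α] {μ : Measure α} {f : α → ℝ}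

theorem Integrable.of_integral_rpow_pos {q : ℝ} (hq : q ≠ 0) (h : 0 < (∫ x, f x ∂μ) ^ q) :
    Integrable f μ :=
  Integrable.of_integral_ne_zero fun h0 => by simp [h0, zero_rpow hq] at h

theorem sq_setIntegral_le_integral_sq_mul_measureReal [IsFiniteMeasure μ] (hf₀ : 0 ≤ᵐ[μ] f)
    (hf : MemLp f 2 μ) (s : Set α) :
    (∫ x in s, f x ∂μ) ^ 2 ≤ (∫ x, f x ^ 2 ∂μ) * μ.real s := by
  have hf₂ : MemLp f (ENNReal.ofReal 2) (μ.restrict s) := by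
    simpa using hf.restrict s
  have holder := integral_mul_le_Lp_mul_Lq_of_nonneg HolderConjugate.two_two
    (ae_restrict_of_ae hf₀) (ae_of_all _ fun _ => zero_le_one) hf₂ (memLp_const (1 : ℝ))
  simp only [mul_one, one_pow, integral_const, smul_eq_mul, rpow_two,
    measureReal_restrict_apply_univ] at holder
  calc (∫ x in s, f x ∂μ) ^ 2
      ≤ ((∫ x in s, f x ^ 2 ∂μ) ^ (1 / 2 : ℝ) * μ.real s ^ (1 / 2 : ℝ)) ^ 2 :=
        pow_le_pow_left₀ (integral_nonneg_of_ae (ae_restrict_of_ae hf₀)) holder 2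
    _ = (∫ x in s, f x ^ 2 ∂μ) * μ.real s := by
        rw [mul_pow, ← sqrt_eq_rpow, ← sqrt_eq_rpow, sq_sqrt, sq_sqrt] <;> positivity
    _ ≤ (∫ x, f x ^ 2 ∂μ) * μ.real s := by
        gcongr ?_ * _
        exact setIntegral_le_integral hf.integrable_sq (ae_of_all _ fun _ => sq_nonneg _)

theorem integral_le_add_setIntegral_le [IsProbabilityMeasure μ] (hf : Integrable f μ) {θ : ℝ}
    (hθ : 0 ≤ θ) :
    ∫ x, f x ∂μ ≤ θ + ∫ x in {x | θ ≤ f x}, f x ∂μ := by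
  set s := {x | θ ≤ f x}
  have hs : NullMeasurableSet s μ := hf.aemeasurable.nullMeasurable measurableSet_Ici
  have hsc : ∫ x in sᶜ, f x ∂μ ≤ θ := calc
    ∫ x in sᶜ, f x ∂μ ≤ ∫ _ in sᶜ, θ ∂μ := by
      refine setIntegral_mono_ae_restrict hf.integrableOn integrableOn_const ?_
      filter_upwards [ae_restrict_mem₀ hs.compl] with x hx using le_of_not_ge hx
    _ = μ.real sᶜ * θ := by rw [setIntegral_const, smul_eq_mul]
    _ ≤ θ := mul_le_of_le_one_left hθ measureReal_le_one
  linarith [integral_add_compl₀ hs hf]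

/-- **Paley–Zygmund inequality** -/
theorem sq_integral_sub_le_integral_sq_mul_measureReal [IsProbabilityMeasure μ]
    (hf₀ : 0 ≤ᵐ[μ] f) (hf : MemLp f 2 μ) {θ : ℝ} (hθ : 0 ≤ θ) (hθf : θ ≤ ∫ x, f x ∂μ) :
    (∫ x, f x ∂μ - θ) ^ 2 ≤ (∫ x, f x ^ 2 ∂μ) * μ.real {x | θ ≤ f x} := calc
  (∫ x, f x ∂μ - θ) ^ 2 ≤ (∫ x in {x | θ ≤ f x}, f x ∂μ) ^ 2 := by
    refine pow_le_pow_left₀ (sub_nonneg.mpr hθf) ?_ 2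
    linarith [integral_le_add_setIntegral_le (hf.integrable one_le_two) hθ]
  _ ≤ _ := sq_setIntegral_le_integral_sq_mul_measureReal hf₀ hf _

end PaleyZygmund

section Moments

variable {Ω : Type*} [MeasurableSpace Ω] {μ : Measure Ω} {h : Ω → ℝ} {p t C₁ C₂ β : ℝ}

theorem measureReal_le_abs_le_div_rpow_of_moment_le (hp : 0 < p) (ht : 0 < t) {M : ℝ}
    (hint : Integrable (fun ω => |h ω| ^ p) μ) (hM : (∫ ω, |h ω| ^ p ∂μ) ^ (1 / p) ≤ M) :
    μ.real {ω | t ≤ |h ω|} ≤ (M / t) ^ p := by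
  have hI : 0 ≤ ∫ ω, |h ω| ^ p ∂μ := integral_nonneg fun ω => by positivity
  have hMp : ∫ ω, |h ω| ^ p ∂μ ≤ M ^ p := by
    rwa [one_div, rpow_inv_le_iff_of_pos hI ((rpow_nonneg hI _).trans hM) hp] at hM
  have hset : {ω | t ≤ |h ω|} = {ω | t ^ p ≤ |h ω| ^ p} := by
    ext ω
    exact (rpow_le_rpow_iff ht.le (abs_nonneg _) hp).symm
  have markov := mul_meas_ge_le_integral_of_nonneg
    (ae_of_all _ fun ω => by positivity) hint (t ^ p)
  rw [← hset] at markov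
  rw [div_rpow ((rpow_nonneg hI _).trans hM) ht.le, le_div_iff₀ (by positivity)]
  linarith

theorem div_rpow_div_four_le_measureReal_le_abs [IsProbabilityMeasure μ] (hp : 1 ≤ p)
    (ht : 0 ≤ t) {m M : ℝ} (hm : 0 < m) (htm : 2 * t ≤ m)
    (hint₂ : Integrable (fun ω => |h ω| ^ (2 * p)) μ)
    (hlow : m ≤ (∫ ω, |h ω| ^ p ∂μ) ^ (1 / p))
    (hup : (∫ ω, |h ω| ^ (2 * p) ∂μ) ^ (1 / (2 * p)) ≤ M) :
    (m / M) ^ (2 * p) / 4 ≤ μ.real {ω | t ≤ |h ω|} := by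
  have hp₀ : 0 < p := by linarith
  set I := ∫ ω, |h ω| ^ p ∂μ
  set J := ∫ ω, |h ω| ^ (2 * p) ∂μ
  set P := μ.real {ω | t ≤ |h ω|}
  have hI₀ : 0 ≤ I := integral_nonneg fun ω => by positivity
  have hJ₀ : 0 ≤ J := integral_nonneg fun ω => by positivity
  have hM : 0 ≤ M := (rpow_nonneg hJ₀ _).trans hup
  have hI : m ^ p ≤ I := by
    rwa [one_div, le_rpow_inv_iff_of_pos hm.le hI₀ hp₀] at hlow
  have hJ : J ≤ M ^ (2 * p) := by
    rwa [one_div, rpow_inv_le_iff_of_pos hJ₀ hM (by linarith)] at hup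
  have htI : t ^ p ≤ I / 2 := calc
    t ^ p ≤ (m / 2) ^ p := by gcongr; linarith
    _ = m ^ p / 2 ^ p := div_rpow hm.le zero_le_two _
    _ ≤ m ^ p / 2 := by gcongr; simpa using rpow_le_rpow_of_exponent_le one_le_two hp
    _ ≤ I / 2 := by gcongr
  have hpow : ∀ {x : ℝ}, 0 ≤ x → (x ^ p) ^ 2 = x ^ (2 * p) := fun hx => by
    rw [← rpow_natCast, ← rpow_mul hx, mul_comm]; norm_num
  have hsq : ∀ ω, (|h ω| ^ p) ^ 2 = |h ω| ^ (2 * p) := fun ω => hpow (abs_nonneg _)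
  have hset : {ω | t ^ p ≤ |h ω| ^ p} = {ω | t ≤ |h ω|} := by
    ext ω
    exact rpow_le_rpow_iff ht (abs_nonneg _) hp₀
  have hmem : MemLp (fun ω => |h ω| ^ p) 2 μ := by
    refine (memLp_two_iff_integrable_sq ?_).mpr (by simpa only [hsq] using hint₂)
    exact (Integrable.of_integral_rpow_pos (one_div_ne_zero hp₀.ne')
      (hm.trans_le hlow)).aestronglyMeasurable
  have pz := sq_integral_sub_le_integral_sq_mul_measureReal (ae_of_all _ fun ω => by positivity)
    hmem (rpow_nonneg ht p) (by linarith)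
  simp only [hsq, hset] at pz
  have key : (m ^ p) ^ 2 / 4 ≤ M ^ (2 * p) * P := calc
    (m ^ p) ^ 2 / 4 = (m ^ p / 2) ^ 2 := by ring
    _ ≤ (I - t ^ p) ^ 2 := by gcongr; linarith
    _ ≤ J * P := pz
    _ ≤ M ^ (2 * p) * P := by gcongr
  rcases hM.eq_or_lt with rfl | hM₀
  · rw [div_zero, zero_rpow (by positivity), zero_div]
    exact measureReal_nonneg
  · rw [div_rpow hm.le hM, ← hpow hm.le, div_div, div_le_iff₀ (by positivity)]
    linarith

theorem measureReal_le_abs_le_exp_of_moment_le (hC₂ : 0 < C₂) (hβ : 0 < β)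
    (hint : ∀ p : ℝ, 2 ≤ p → Integrable (fun ω => |h ω| ^ p) μ)
    (hmom : ∀ p, 2 ≤ p → (∫ ω, |h ω| ^ p ∂μ) ^ (1 / p) ≤ C₂ * p ^ β) (ht : 0 ≤ t)
    (hts : 2 * (exp 1 * C₂) ^ (1 / β) ≤ t ^ (1 / β)) :
    μ.real {ω | t ≤ |h ω|} ≤ exp (-(t ^ (1 / β) / (exp 1 * C₂) ^ (1 / β))) := by
  have haβ : ((exp 1 * C₂) ^ (1 / β)) ^ β = exp 1 * C₂ := by
    rw [one_div, rpow_inv_rpow (by positivity) hβ.ne']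
  set a := (exp 1 * C₂) ^ (1 / β)
  have ha : 0 < a := by positivity
  rcases ht.eq_or_lt with rfl | ht₀
  · rw [zero_rpow (by positivity)] at hts
    linarith
  set p := t ^ (1 / β) / a
  have hp : 2 ≤ p := (le_div_iff₀ ha).mpr hts
  have hpβ : p ^ β = t / (exp 1 * C₂) := by
    rw [div_rpow (by positivity) ha.le, haβ, one_div, rpow_inv_rpow ht hβ.ne']
  calc μ.real {ω | t ≤ |h ω|} ≤ (C₂ * p ^ β / t) ^ p :=
        measureReal_le_abs_le_div_rpow_of_moment_le (by linarith) ht₀ (hint p hp) (hmom p hp)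
    _ = exp (-p) := by
        rw [hpβ, show C₂ * (t / (exp 1 * C₂)) / t = exp (-1) by
          rw [exp_neg]; field_simp, ← exp_mul, neg_one_mul]

theorem rpow_le_measureReal_le_abs [IsProbabilityMeasure μ] (hC₁ : 0 < C₁) (hC : C₁ ≤ C₂)
    (hβ : 0 < β) (hint : ∀ p : ℝ, 2 ≤ p → Integrable (fun ω => |h ω| ^ p) μ)
    (hmom : ∀ p, 2 ≤ p →
      C₁ * p ^ β ≤ (∫ ω, |h ω| ^ p ∂μ) ^ (1 / p) ∧ (∫ ω, |h ω| ^ p ∂μ) ^ (1 / p) ≤ C₂ * p ^ β)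
    (ht : 0 ≤ t) :
    (C₁ / (C₂ * 2 ^ β)) ^ (2 * (2 + t ^ (1 / β) / (C₁ / 2) ^ (1 / β))) / 4 ≤
      μ.real {ω | t ≤ |h ω|} := by
  have hC₂ : 0 < C₂ := hC₁.trans_le hC
  have hbβ : ((C₁ / 2) ^ (1 / β)) ^ β = C₁ / 2 := by
    rw [one_div, rpow_inv_rpow (by positivity) hβ.ne']
  set b := (C₁ / 2) ^ (1 / β)
  have hb : 0 < b := by positivity
  have hs : 0 ≤ t ^ (1 / β) / b := by positivity
  set p := max 2 (t ^ (1 / β) / b)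
  have hp : 2 ≤ p := le_max_left _ _
  have hp' : p ≤ 2 + t ^ (1 / β) / b := max_le (by linarith) (by linarith)
  have htp : 2 * t ≤ C₁ * p ^ β := by
    have hpβ : t / (C₁ / 2) ≤ p ^ β := calc
      t / (C₁ / 2) = (t ^ (1 / β) / b) ^ β := by
        rw [div_rpow (by positivity) hb.le, hbβ, one_div, rpow_inv_rpow ht hβ.ne']
      _ ≤ p ^ β := rpow_le_rpow hs (le_max_right _ _) hβ.le
    rw [div_le_iff₀ (by positivity)] at hpβ
    linarith
  have hratio : C₁ * p ^ β / (C₂ * (2 * p) ^ β) = C₁ / (C₂ * 2 ^ β) := by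
    rw [mul_rpow zero_le_two (by linarith)]
    field_simp
  have hr₁ : C₁ / (C₂ * 2 ^ β) ≤ 1 :=
    (div_le_one (by positivity)).mpr
      (hC.trans (le_mul_of_one_le_right hC₂.le (one_le_rpow one_le_two hβ.le)))
  calc (C₁ / (C₂ * 2 ^ β)) ^ (2 * (2 + t ^ (1 / β) / b)) / 4
      ≤ (C₁ / (C₂ * 2 ^ β)) ^ (2 * p) / 4 := by
        refine div_le_div_of_nonneg_right (rpow_le_rpow_of_exponent_ge (by positivity) hr₁ ?_)
          zero_le_four
        linarith
    _ = (C₁ * p ^ β / (C₂ * (2 * p) ^ β)) ^ (2 * p) / 4 := by rw [hratio]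
    _ ≤ μ.real {ω | t ≤ |h ω|} :=
        div_rpow_div_four_le_measureReal_le_abs (by linarith) ht (by positivity) htp
          (hint _ (by linarith)) (hmom p hp).1 (hmom (2 * p) (by linarith)).2

end Moments

theorem le_exp_mul_exp_neg_div_exp {P s a : ℝ} (ha : 0 < a) (hs : 0 ≤ s) (hP₁ : P ≤ 1)
    (hP : 2 * a ≤ s → P ≤ exp (-(s / a))) :
    P ≤ exp (2 * a) * exp (-s / exp (2 * a)) := by
  have hc₁ : 1 ≤ exp (2 * a) := one_le_exp (by positivity)
  have hac : a ≤ exp (2 * a) := by linarith [add_one_le_exp (2 * a)]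
  have hsc : s / exp (2 * a) ≤ s := div_le_self hs hc₁
  rcases lt_or_ge s (2 * a) with hsa | hsa
  · calc P ≤ 1 := hP₁
      _ = exp (2 * a) * exp (-(2 * a)) := by rw [← exp_add, add_neg_cancel, exp_zero]
      _ ≤ exp (2 * a) * exp (-s / exp (2 * a)) := by gcongr; rw [neg_div]; linarith
  · calc P ≤ exp (-(s / a)) := hP hsa
      _ ≤ exp (-s / exp (2 * a)) := by gcongr; rw [neg_div]; gcongr
      _ ≤ exp (2 * a) * exp (-s / exp (2 * a)) := le_mul_of_one_le_left (exp_pos _).le hc₁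

theorem min_mul_exp_neg_div_min_le_rpow {r b s : ℝ} (hr₀ : 0 < r) (hr₁ : r < 1) (hb : 0 < b)
    (hs : 0 ≤ s) :
    min (r ^ 4 / 4) (b / (2 * -log r)) * exp (-s / min (r ^ 4 / 4) (b / (2 * -log r))) ≤
      r ^ (2 * (2 + s / b)) / 4 := by
  set c := min (r ^ 4 / 4) (b / (2 * -log r))
  have hL : 0 < -log r := neg_pos.mpr (log_neg hr₀ hr₁)
  have hc : 0 < c := lt_min (by positivity) (by positivity)
  have hexp : exp (-s / c) ≤ r ^ (2 * s / b) := by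
    rw [rpow_def_of_pos hr₀, exp_le_exp]
    have hcL : 2 * -log r / b ≤ 1 / c := by
      rw [le_one_div (by positivity) hc, one_div_div]
      exact min_le_right _ _
    calc log r * (2 * s / b) = -(s * (2 * -log r / b)) := by ring
      _ ≥ -(s * (1 / c)) := by gcongr
      _ = -s / c := by ring
  calc c * exp (-s / c) ≤ r ^ 4 / 4 * r ^ (2 * s / b) :=
        mul_le_mul (min_le_left _ _) hexp (exp_pos _).le (by positivity)
    _ = r ^ (2 * (2 + s / b)) / 4 := by
        rw [mul_add, rpow_add hr₀, mul_div_assoc]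
        norm_num
        ring

/-- Tail bounds from moment growth: if `C₁ p^β ≤ E[|h|^p]^{1/p} ≤ C₂ p^β` for all
`p ≥ 2`, then there are constants `c₁, c₂ > 0` depending only on `C₁, C₂, β` with
`c₁ e^{-t^{1/β}/c₁} ≤ P[|h| ≥ t] ≤ c₂ e^{-t^{1/β}/c₂}` for all `t ≥ 0`. -/
theorem stmt11 (C₁ C₂ β : ℝ) (hC₁ : 0 < C₁) (hC : C₁ ≤ C₂) (hβ : 0 < β) :
    ∃ c₁ c₂ : ℝ, 0 < c₁ ∧ 0 < c₂ ∧
      ∀ (Ω : Type) (_ : MeasurableSpace Ω) (μ : Measure Ω), IsProbabilityMeasure μ →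
      ∀ h : Ω → ℝ, Measurable h →
      (∀ p : ℝ, 2 ≤ p →
        C₁ * p ^ β ≤ (∫ ω, |h ω| ^ p ∂μ) ^ (1 / p) ∧
          (∫ ω, |h ω| ^ p ∂μ) ^ (1 / p) ≤ C₂ * p ^ β) →
      ∀ t : ℝ, 0 ≤ t →
        c₁ * Real.exp (-(t ^ (1 / β)) / c₁) ≤ (μ {ω | t ≤ |h ω|}).toReal ∧
          (μ {ω | t ≤ |h ω|}).toReal ≤ c₂ * Real.exp (-(t ^ (1 / β)) / c₂) := by
  have hC₂ : 0 < C₂ := hC₁.trans_le hC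
  set r := C₁ / (C₂ * 2 ^ β)
  have hr₀ : 0 < r := by positivity
  have hr₁ : r < 1 := (div_lt_one (by positivity)).mpr
    (hC.trans_lt (lt_mul_of_one_lt_right hC₂ (one_lt_rpow one_lt_two hβ)))
  set a := (exp 1 * C₂) ^ (1 / β)
  set b := (C₁ / 2) ^ (1 / β)
  refine ⟨min (r ^ 4 / 4) (b / (2 * -log r)), exp (2 * a),
    lt_min (by positivity) (div_pos (by positivity) (by linarith [log_neg hr₀ hr₁])), exp_pos _, ?_⟩
  intro Ω _ μ _ h _ hmom t ht
  have hint : ∀ p : ℝ, 2 ≤ p → Integrable (fun ω => |h ω| ^ p) μ := fun p hp =>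
    Integrable.of_integral_rpow_pos (one_div_ne_zero (by positivity))
      ((by positivity : 0 < C₁ * p ^ β).trans_le (hmom p hp).1)
  exact ⟨(min_mul_exp_neg_div_min_le_rpow hr₀ hr₁ (by positivity) (by positivity)).trans
      (rpow_le_measureReal_le_abs hC₁ hC hβ hint hmom ht),
    le_exp_mul_exp_neg_div_exp (by positivity) (by positivity) measureReal_le_one
      (measureReal_le_abs_le_exp_of_moment_le hC₂ hβ hint (fun p hp => (hmom p hp).2) ht)⟩
end
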